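/- arXiv:1910.07159 — 8 statements merged into one kernel-verified Lean document; each statement's English description precedes it below -/
import Mathlib

section
/- In any HR instance, if a resident is unmatched in some stable matching, then that resident is unmatched in every envy-free matching. -/
/-- An HRLQ instance: bipartite graph on residents `R` and hospitals `H` with
strict preferences encoded as rank functions (lower rank = more preferred)
and lower/upper quotas per hospital. -/
structure HRLQ (R H : Type) where
  E : R → H → Prop
  rPref : R → H → ℕ
  hPref : H → R → ℕ
  lq : H → ℕ
  uq : H → ℕ

namespace HRLQ

variable {R H : Type}

/-- residents matched to hospital `h` -/
def matchedTo (M : R → Option H) (h : H) : Set R := {r | M r = some h}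

/-- size of a matching -/
noncomputable def msize (M : R → Option H) : ℕ := {r | M r ≠ none}.ncard

variable (I : HRLQ R H)

/-- resident `r` strictly prefers hospital `h` to assignment `o`
    (being unmatched is least preferred); `h` must be acceptable to `r`. -/
def PrefersH (r : R) (h : H) (o : Option H) : Prop :=
  I.E r h ∧ ∀ h', o = some h' → I.rPref r h < I.rPref r h'

def IsMatching (M : R → Option H) : Prop :=
  (∀ r h, M r = some h → I.E r h) ∧ ∀ h, (matchedTo M h).ncard ≤ I.uq h

def Feasible (M : R → Option H) : Prop :=
  ∀ h, I.lq h ≤ (matchedTo M h).ncard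

def Blocks (M : R → Option H) (r : R) (h : H) : Prop :=
  I.E r h ∧ M r ≠ some h ∧ I.PrefersH r h (M r) ∧
    ((matchedTo M h).ncard < I.uq h ∨ ∃ r' ∈ matchedTo M h, I.hPref h r < I.hPref h r')

def Stable (M : R → Option H) : Prop := ∀ r h, ¬ I.Blocks M r h

def Envies (M : R → Option H) (r r' : R) : Prop :=
  ∃ h, M r' = some h ∧ I.PrefersH r h (M r) ∧ I.hPref h r < I.hPref h r'

def EnvyFree (M : R → Option H) : Prop := ∀ r r', ¬ I.Envies M r r'

def RelaxedStable (M : R → Option H) : Prop :=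
  (∀ h, {r | r ∈ matchedTo M h ∧ ∃ h', I.Blocks M r h'}.ncard ≤ I.lq h) ∧
  ∀ r, M r = none → ∀ h, ¬ I.Blocks M r h

/-- preferences are strict -/
def StrictPrefs : Prop :=
  (∀ r, Function.Injective (I.rPref r)) ∧ ∀ h, Function.Injective (I.hPref h)

end HRLQ

/-! Let `T` be the set of hospitals that, under the envy-free matching `Me`, receive a resident
who prefers them to her partner in the stable matching `Ms`. Stability of `Ms` makes every
`h ∈ T` full in `Ms`, with residents that `h` ranks above that improving resident; envy-freeness
of `Me` then forces each of them who leaves `h` to move up, hence into `T`. So the residents `Ms`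
assigns to `T` are among those `Me` assigns to `T`, and since each `h ∈ T` holds `q⁺(h)` residents
under `Ms` and at most that many under `Me`, the two sets coincide. A resident unmatched in `Ms`
but matched in `Me` would lie in the second set and not in the first. -/

namespace HRLQ

variable {R H : Type}

def matchedInto (M : R → Option H) (T : Set H) : Set R := {r | ∃ h ∈ T, M r = some h}

theorem matchedInto_eq_biUnion (M : R → Option H) (T : Set H) :
    matchedInto M T = ⋃ h ∈ T, matchedTo M h := by
  ext r
  simp [matchedInto, matchedTo]

theorem ncard_matchedInto [Finite R] (M : R → Option H) {T : Set H} (hT : T.Finite) :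
    (matchedInto M T).ncard = ∑ h ∈ hT.toFinset, (matchedTo M h).ncard := by
  have hdisj : T.PairwiseDisjoint (matchedTo M) := fun h₁ _ h₂ _ hne =>
    Set.disjoint_left.2 fun r hr₁ hr₂ => hne (Option.some.inj (hr₁.symm.trans hr₂))
  rw [matchedInto_eq_biUnion, hT.ncard_biUnion (fun _ _ => Set.toFinite _) hdisj,
    finsum_mem_eq_finite_toFinset_sum _ hT]

theorem matchedInto_eq_of_subset [Finite R] {M₁ M₂ : R → Option H} {T : Set H} (hT : T.Finite)
    (hsub : matchedInto M₁ T ⊆ matchedInto M₂ T)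
    (hle : ∀ h ∈ T, (matchedTo M₂ h).ncard ≤ (matchedTo M₁ h).ncard) :
    matchedInto M₁ T = matchedInto M₂ T := by
  refine Set.eq_of_subset_of_ncard_le hsub ?_ (Set.toFinite _)
  rw [ncard_matchedInto M₁ hT, ncard_matchedInto M₂ hT]
  exact Finset.sum_le_sum fun h hh => hle h (hT.mem_toFinset.1 hh)

variable (I : HRLQ R H)

def improvingHospitals (Ms Me : R → Option H) : Set H :=
  {h | ∃ r, Me r = some h ∧ I.PrefersH r h (Ms r)}

theorem finite_improvingHospitals [Finite R] (Ms Me : R → Option H) :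
    (I.improvingHospitals Ms Me).Finite :=
  ((Set.finite_range Me).preimage (Option.some_injective H).injOn).subset
    fun _ ⟨r, hr, _⟩ => ⟨r, hr⟩

variable {I} {M Ms Me : R → Option H} {r s : R} {h : H} {o : Option H}

theorem PrefersH.ne_some (hr : I.PrefersH r h o) : o ≠ some h :=
  fun ho => lt_irrefl _ (hr.2 h ho)

theorem Stable.uq_le_ncard (hM : I.Stable M) (hr : I.PrefersH r h (M r)) :
    I.uq h ≤ (matchedTo M h).ncard :=
  not_lt.1 fun hlt => hM r h ⟨hr.1, hr.ne_some, hr, .inl hlt⟩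

theorem Stable.hPref_lt (hM : I.Stable M) (hinj : Function.Injective (I.hPref h))
    (hr : I.PrefersH r h (M r)) (hs : M s = some h) : I.hPref h s < I.hPref h r := by
  have hle : I.hPref h s ≤ I.hPref h r :=
    not_lt.1 fun hlt => hM r h ⟨hr.1, hr.ne_some, hr, .inr ⟨s, hs, hlt⟩⟩
  have hsr : s ≠ r := by
    rintro rfl
    exact hr.ne_some hs
  exact hle.lt_of_ne (hinj.ne hsr)

theorem EnvyFree.rPref_lt_of_moved (hEF : I.EnvyFree Me)
    (hinj : Function.Injective (I.rPref s)) (hs : I.E s h) (hr : Me r = some h)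
    (hlt : I.hPref h s < I.hPref h r) (hsh : Me s ≠ some h) :
    ∃ h', Me s = some h' ∧ I.rPref s h' < I.rPref s h := by
  have hnot : ¬ I.PrefersH s h (Me s) := fun hpref => hEF s r ⟨h, hr, hpref, hlt⟩
  simp only [PrefersH, hs, true_and, not_forall, not_lt] at hnot
  obtain ⟨h', hs', hle⟩ := hnot
  have hne : h' ≠ h := by
    rintro rfl
    exact hsh hs'
  exact ⟨h', hs', hle.lt_of_ne (hinj.ne hne)⟩

theorem matchedInto_improvingHospitals_subset (hstrict : I.StrictPrefs)
    (hMs : I.IsMatching Ms) (hStable : I.Stable Ms) (hMe : I.IsMatching Me)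
    (hEF : I.EnvyFree Me) :
    matchedInto Ms (I.improvingHospitals Ms Me) ⊆ matchedInto Me (I.improvingHospitals Ms Me) := by
  rintro s ⟨h, ⟨r, hr, hpref⟩, hs⟩
  by_cases hsh : Me s = some h
  · exact ⟨h, ⟨r, hr, hpref⟩, hsh⟩
  obtain ⟨h', hs', hlt⟩ := hEF.rPref_lt_of_moved (hstrict.1 s) (hMs.1 s h hs) hr
    (hStable.hPref_lt (hstrict.2 h) hpref hs) hsh
  refine ⟨h', ⟨s, hs', hMe.1 s h' hs', ?_⟩, hs'⟩
  rintro _ hs''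
  rw [hs, Option.some.injEq] at hs''
  exact hs'' ▸ hlt

end HRLQ

theorem unmatched_in_stable_implies_unmatched_in_envy_free_general
    {R H : Type} [Fintype R] (I : HRLQ R H)
    (hstrict : I.StrictPrefs)
    (Ms Me : R → Option H)
    (hMs : I.IsMatching Ms) (hMsStable : I.Stable Ms)
    (hMe : I.IsMatching Me) (hMeEF : I.EnvyFree Me)
    (r : R) (hr : Ms r = none) :
    Me r = none := by
  by_contra hne
  obtain ⟨h, hh⟩ := Option.ne_none_iff_exists'.mp hne
  have hpref : I.PrefersH r h (Ms r) := ⟨hMe.1 r h hh, by simp [hr]⟩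
  have heq := HRLQ.matchedInto_eq_of_subset (I.finite_improvingHospitals Ms Me)
    (HRLQ.matchedInto_improvingHospitals_subset hstrict hMs hMsStable hMe hMeEF)
    fun h' ⟨_, _, hspref⟩ => (hMe.2 h').trans (hMsStable.uq_le_ncard hspref)
  have hrMe : r ∈ HRLQ.matchedInto Me (I.improvingHospitals Ms Me) := ⟨h, ⟨r, hh, hpref⟩, hh⟩
  obtain ⟨_, _, hrMs⟩ := heq ▸ hrMe
  simp [hr] at hrMs

/-- If a resident is unmatched in some stable matching of an HR instance,
then it is unmatched in every envy-free matching. -/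
theorem unmatched_in_stable_implies_unmatched_in_envy_free
    {R H : Type} [Fintype R] [Fintype H] (I : HRLQ R H)
    (hstrict : I.StrictPrefs)
    (Ms Me : R → Option H)
    (hMs : I.IsMatching Ms) (hMsStable : I.Stable Ms)
    (hMe : I.IsMatching Me) (hMeEF : I.EnvyFree Me)
    (r : R) (hr : Ms r = none) :
    Me r = none :=
  unmatched_in_stable_implies_unmatched_in_envy_free_general I hstrict Ms Me hMs hMsStable hMe hMeEF
    r hr
end

section
/- Every HRLQ instance that admits a feasible matching admits a feasible relaxed stable matching. -/
namespace HRLQ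

variable {R H : Type}

section DeferredAcceptance

variable (I : HRLQ R H)

noncomputable def favourite (r : R) (s : Finset H) : Option H :=
  if hs : s.Nonempty then some (s.exists_min_image (I.rPref r) hs).choose else none

variable {I}

lemma favourite_spec {r : R} {s : Finset H} {h : H} (hf : I.favourite r s = some h) :
    h ∈ s ∧ ∀ h' ∈ s, I.rPref r h ≤ I.rPref r h' := by
  unfold favourite at hf
  split_ifs at hf with hs
  cases hf
  exact (s.exists_min_image (I.rPref r) hs).choose_spec

lemma favourite_ne_none {r : R} {s : Finset H} (hs : s.Nonempty) : I.favourite r s ≠ none := by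
  simp [favourite, hs]

variable (I)

noncomputable def proposals (A : R → Finset H) (r : R) : Option H := I.favourite r (A r)

/-- Invariant of resident-proposing deferred acceptance: `A r` holds the hospitals that have not
rejected `r` yet, and a hospital that has rejected an acceptable `r` is proposed to by at least
`uq h` residents it prefers to `r`. -/
def DAInvariant (A : R → Finset H) : Prop :=
  (∀ r, ∀ h ∈ A r, I.E r h) ∧
  ∀ r h, I.E r h → h ∉ A r →
    I.uq h ≤ {r' ∈ matchedTo (I.proposals A) h | I.hPref h r' < I.hPref h r}.ncard

variable {I} {A : R → Finset H}

lemma DAInvariant.isMatching_stable [Fintype R] (hA : I.DAInvariant A)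
    (hcap : ∀ h, (matchedTo (I.proposals A) h).ncard ≤ I.uq h) :
    I.IsMatching (I.proposals A) ∧ I.Stable (I.proposals A) := by
  refine ⟨⟨fun r h hr => hA.1 r h (favourite_spec hr).1, hcap⟩, ?_⟩
  rintro r h ⟨hE, -, ⟨-, hpref⟩, hroom⟩
  by_cases hmem : h ∈ A r
  · obtain ⟨h₀, hh₀⟩ :=
      Option.ne_none_iff_exists'.mp (favourite_ne_none (I := I) ⟨h, hmem⟩)
    exact (hpref h₀ hh₀).not_ge ((favourite_spec hh₀).2 h hmem)
  · have hfull := hA.2 r h hE hmem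
    have hbetter : {r' ∈ matchedTo (I.proposals A) h | I.hPref h r' < I.hPref h r} =
        matchedTo (I.proposals A) h :=
      Set.eq_of_subset_of_ncard_le (Set.sep_subset _ _) ((hcap h).trans hfull)
    rcases hroom with hlt | ⟨r', hr', hlt⟩
    · exact hlt.not_ge (hfull.trans (Set.ncard_le_ncard (Set.sep_subset _ _)))
    · rw [← hbetter] at hr'
      exact hlt.asymm hr'.2

lemma proposals_update_of_ne [DecidableEq R] {w r : R} (s : Finset H) (hr : r ≠ w) :
    I.proposals (Function.update A w s) r = I.proposals A r := by
  simp [proposals, Function.update_of_ne hr]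

lemma matchedTo_proposals_subset_of_reject [DecidableEq R] [DecidableEq H] {w : R} {h₀ h : H}
    (hw : I.proposals A w = some h₀) (hh : h ≠ h₀) :
    matchedTo (I.proposals A) h ⊆
      matchedTo (I.proposals (Function.update A w ((A w).erase h₀))) h := by
  intro r (hr : I.proposals A r = some h)
  have hrw : r ≠ w := by rintro rfl; exact hh (Option.some.inj (hr.symm.trans hw))
  show I.proposals _ r = some h
  rwa [proposals_update_of_ne _ hrw]

lemma matchedTo_proposals_reject [DecidableEq R] [DecidableEq H] {w : R} {h₀ : H} :
    matchedTo (I.proposals (Function.update A w ((A w).erase h₀))) h₀ =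
      matchedTo (I.proposals A) h₀ \ {w} := by
  ext r
  rcases eq_or_ne r w with rfl | hrw
  · have hw : I.proposals (Function.update A r ((A r).erase h₀)) r ≠ some h₀ := fun hf => by
      simpa [proposals] using (favourite_spec hf).1
    simpa [matchedTo] using hw
  · simp [matchedTo, proposals_update_of_ne _ hrw, hrw]

lemma DAInvariant.reject [Fintype R] [DecidableEq R] [DecidableEq H]
    (hinj : ∀ h, Function.Injective (I.hPref h)) (hA : I.DAInvariant A)
    {w : R} {h₀ : H} (hw : I.proposals A w = some h₀)
    (hworst : ∀ r ∈ matchedTo (I.proposals A) h₀, I.hPref h₀ r ≤ I.hPref h₀ w)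
    (hover : I.uq h₀ < (matchedTo (I.proposals A) h₀).ncard) :
    I.DAInvariant (Function.update A w ((A w).erase h₀)) := by
  set A' := Function.update A w ((A w).erase h₀)
  have hA' : ∀ r, A' r = A r ∨ r = w ∧ A' r = (A r).erase h₀ := by
    intro r
    rcases eq_or_ne r w with rfl | hrw
    · simp [A']
    · simp [A', Function.update_of_ne hrw]
  refine ⟨fun r h hh => hA.1 r h ?_, fun r h hE hh => ?_⟩
  · rcases hA' r with hr | ⟨-, hr⟩ <;> rw [hr] at hh
    exacts [hh, Finset.mem_of_mem_erase hh]
  set P := matchedTo (I.proposals A) h₀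
  rcases eq_or_ne h h₀ with rfl | hne
  · rw [matchedTo_proposals_reject]
    by_cases hbetter : r = w ∨ I.hPref h w < I.hPref h r
    -- `w` is the worst proposer, so in this case every other proposer beats `r`
    · have hall : P \ {w} ⊆ {r' ∈ P \ {w} | I.hPref h r' < I.hPref h r} := by
        rintro r' ⟨hr', hr'w⟩
        have hlt := lt_of_le_of_ne (hworst r' hr') fun heq => hr'w (hinj h heq)
        refine ⟨⟨hr', hr'w⟩, ?_⟩
        rcases hbetter with rfl | hwr
        exacts [hlt, hlt.trans hwr]
      calc I.uq h ≤ (P \ {w}).ncard := by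
            rw [Set.ncard_sdiff_singleton_of_mem (show w ∈ P from hw)]; omega
        _ ≤ _ := Set.ncard_le_ncard hall
    · push Not at hbetter
      have hold := hA.2 r h hE <| (hA' r).elim (· ▸ hh) fun hrw => absurd hrw.1 hbetter.1
      refine hold.trans (Set.ncard_le_ncard ?_)
      rintro r' ⟨hr', hlt⟩
      exact ⟨⟨hr', by rintro rfl; exact hbetter.2.not_gt hlt⟩, hlt⟩
  · have hold := hA.2 r h hE fun hr => hh <| by
      rcases hA' r with hr' | ⟨-, hr'⟩ <;> rw [hr']
      exacts [hr, Finset.mem_erase.mpr ⟨hne, hr⟩]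
    refine hold.trans (Set.ncard_le_ncard ?_)
    exact fun r' ⟨hr', hlt⟩ => ⟨matchedTo_proposals_subset_of_reject hw hne hr', hlt⟩

theorem exists_stable_of_daInvariant [Fintype R] [DecidableEq R] [DecidableEq H]
    (hinj : ∀ h, Function.Injective (I.hPref h)) (A : R → Finset H) (hA : I.DAInvariant A) :
    ∃ M, I.IsMatching M ∧ I.Stable M := by
  by_cases hcap : ∀ h, (matchedTo (I.proposals A) h).ncard ≤ I.uq h
  · exact ⟨_, hA.isMatching_stable hcap⟩
  push Not at hcap
  obtain ⟨h₀, hover⟩ := hcap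
  obtain ⟨w, hw, hworst⟩ := Set.exists_max_image (matchedTo (I.proposals A) h₀) (I.hPref h₀)
    (Set.toFinite _) (Set.nonempty_of_ncard_ne_zero (by omega))
  exact exists_stable_of_daInvariant hinj _ (hA.reject hinj hw hworst hover)
termination_by ∑ r, (A r).card
decreasing_by
  refine Finset.sum_lt_sum (fun r _ => Finset.card_le_card ?_)
    ⟨w, Finset.mem_univ w, by simpa using Finset.card_erase_lt_of_mem (favourite_spec hw).1⟩
  rcases eq_or_ne r w with rfl | hrw
  · simpa using Finset.erase_subset _ _
  · simp [Function.update_of_ne hrw]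

theorem exists_isMatching_stable [Fintype R] [Fintype H]
    (hinj : ∀ h, Function.Injective (I.hPref h)) : ∃ M, I.IsMatching M ∧ I.Stable M := by
  classical
  refine exists_stable_of_daInvariant hinj (fun r => {h | I.E r h}) ⟨fun r h hh => ?_, ?_⟩
  · simpa using hh
  · intro r h hE hh
    simp [hE] at hh

end DeferredAcceptance

section Anchor

variable (I : HRLQ R H)

noncomputable def hPrefBound [Fintype R] [Fintype H] : ℕ :=
  (Finset.univ.sup fun p : H × R => I.hPref p.1 p.2) + 1

lemma hPref_lt_hPrefBound [Fintype R] [Fintype H] (h : H) (r : R) :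
    I.hPref h r < I.hPrefBound :=
  Nat.lt_succ_of_le <|
    Finset.le_sup (f := fun p : H × R => I.hPref p.1 p.2) (Finset.mem_univ (h, r))

/-- The instance in which every resident assigned by `M0` accepts only its `M0`-hospital and
is ranked by that hospital above everybody it is not assigned to. -/
noncomputable def anchor [Fintype R] [Fintype H] [DecidableEq H] (M0 : R → Option H) :
    HRLQ R H where
  E r h := M0 r = some h ∨ M0 r = none ∧ I.E r h
  rPref := I.rPref
  hPref h r := if M0 r = some h then I.hPref h r else I.hPref h r + I.hPrefBound
  lq := I.lq
  uq := I.uq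

variable {I} [Fintype R] [Fintype H] [DecidableEq H] {M0 M : R → Option H} {r r' : R} {h : H}

lemma anchor_hPref_lt_of_anchored (hr : M0 r = some h) (hr' : M0 r' ≠ some h) :
    (I.anchor M0).hPref h r < (I.anchor M0).hPref h r' := by
  have := I.hPref_lt_hPrefBound h r
  simp only [anchor, if_pos hr, if_neg hr']
  omega

lemma anchor_hPref_lt (hr' : M0 r' ≠ some h) (hlt : I.hPref h r < I.hPref h r') :
    (I.anchor M0).hPref h r < (I.anchor M0).hPref h r' := by
  simp only [anchor, if_neg hr']
  split_ifs <;> omega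

lemma anchor_hPref_injective (hinj : ∀ h, Function.Injective (I.hPref h)) (h : H) :
    Function.Injective ((I.anchor M0).hPref h) := by
  intro r r' heq
  have := I.hPref_lt_hPrefBound h r
  have := I.hPref_lt_hPrefBound h r'
  simp only [anchor] at heq
  split_ifs at heq <;> first | omega | exact hinj h (by omega)

lemma isMatching_of_anchor (hM0 : ∀ r h, M0 r = some h → I.E r h)
    (hM : (I.anchor M0).IsMatching M) : I.IsMatching M :=
  ⟨fun r h hr => (hM.1 r h hr).elim (hM0 r h) And.right, hM.2⟩

lemma matchedTo_subset_of_anchor_stable (hM0 : ∀ h, (matchedTo M0 h).ncard ≤ I.uq h)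
    (hM : (I.anchor M0).IsMatching M) (hst : (I.anchor M0).Stable M) (h : H) :
    matchedTo M0 h ⊆ matchedTo M h := by
  intro r (hr : M0 r = some h)
  show M r = some h
  rcases hMr : M r with _ | h'
  · refine (hst r h ⟨Or.inl hr, by simp [hMr], ⟨Or.inl hr, by simp [hMr]⟩, ?_⟩).elim
    by_contra! hfull
    obtain ⟨hcap, hworse⟩ := hfull
    have hsub : matchedTo M h ⊆ matchedTo M0 h \ {r} := by
      intro r' (hr' : M r' = some h)
      refine ⟨by_contra fun hr'0 =>
        (hworse r' hr').not_gt (I.anchor_hPref_lt_of_anchored hr hr'0), ?_⟩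
      rintro rfl
      simp [hMr] at hr'
    have := Set.ncard_le_ncard hsub
    have := Set.ncard_sdiff_singleton_lt_of_mem (show r ∈ matchedTo M0 h from hr)
    have := hM0 h
    exact absurd hcap (by simp only [anchor]; omega)
  · rcases hM.1 r h' hMr with hr' | ⟨hr', -⟩ <;> rw [hr] at hr'
    exacts [hr'.symm, nomatch hr']

lemma exists_anchored_of_blocks (hst : (I.anchor M0).Stable M) (hr : M0 r = none)
    (hb : I.Blocks M r h) : ∃ r', M0 r' = some h ∧ I.hPref h r < I.hPref h r' := by
  by_contra! hnone
  obtain ⟨hE, hne, ⟨-, hpref⟩, hroom⟩ := hb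
  refine hst r h ⟨Or.inr ⟨hr, hE⟩, hne, ⟨Or.inr ⟨hr, hE⟩, hpref⟩, ?_⟩
  rcases hroom with hlt | ⟨r', hr', hlt⟩
  · exact Or.inl hlt
  · exact Or.inr ⟨r', hr', anchor_hPref_lt (fun h' => (hnone r' h').not_gt hlt) hlt⟩

end Anchor

section Extension

variable {I : HRLQ R H} [Finite R] {M0 M : R → Option H}

lemma feasible_of_subset (hsub : ∀ h, matchedTo M0 h ⊆ matchedTo M h)
    (hM0 : ∀ h, I.lq h ≤ (matchedTo M0 h).ncard) : I.Feasible M :=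
  fun h => (hM0 h).trans (Set.ncard_le_ncard (hsub h))

lemma relaxedStable_of_subset (hsub : ∀ h, matchedTo M0 h ⊆ matchedTo M h)
    (hM0 : ∀ h, (matchedTo M0 h).ncard ≤ I.lq h)
    (hblock : ∀ r h, M0 r = none → ¬ I.Blocks M r h) : I.RelaxedStable M := by
  have hnone : ∀ r, M r = none → M0 r = none := by
    intro r hr
    rcases hr0 : M0 r with _ | h
    · rfl
    · simpa [matchedTo, hr] using hsub h hr0
  refine ⟨fun h => (Set.ncard_le_ncard ?_).trans (hM0 h), fun r hr h => hblock r h (hnone r hr)⟩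
  rintro r ⟨hr, h', hb⟩
  rcases hr0 : M0 r with _ | g
  · exact (hblock r h' hr0 hb).elim
  · have : M r = some g := hsub g hr0
    rwa [show g = h from Option.some.inj (this.symm.trans hr)] at hr0

end Extension

section Exchange

variable (I : HRLQ R H)

def ExactLowerQuota (M : R → Option H) : Prop :=
  (∀ r h, M r = some h → I.E r h) ∧ ∀ h, (matchedTo M h).ncard = I.lq h

def rankSum [Fintype R] (M : R → Option H) : ℕ := ∑ r, (M r).elim 0 (I.hPref · r)

variable {I}

lemma exists_exactLowerQuota [Finite R] {M : R → Option H} (hM : I.IsMatching M)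
    (hf : I.Feasible M) : ∃ M0, I.ExactLowerQuota M0 := by
  classical
  choose S hSM hS using fun h => Set.exists_subset_card_eq (hf h)
  have hmem : ∀ r h,
      (M r).bind (fun g => if r ∈ S g then some g else none) = some h ↔ r ∈ S h := by
    intro r h
    refine ⟨fun hr => ?_, fun hr => ?_⟩
    · obtain ⟨g, -, hg⟩ := Option.bind_eq_some_iff.mp hr
      split_ifs at hg with hrg
      exact Option.some.inj hg ▸ hrg
    · simp [show M r = some h from hSM h hr, hr]
  refine ⟨_, fun r h hr => hM.1 r h (hSM h ((hmem r h).mp hr)), fun h => ?_⟩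
  rw [← hS h]
  exact congrArg Set.ncard (Set.ext fun r => hmem r h)

lemma exists_exactLowerQuota_forall_rankSum_le [Fintype R]
    (hex : ∃ M, I.ExactLowerQuota M) :
    ∃ M0, I.ExactLowerQuota M0 ∧
      ∀ M, I.ExactLowerQuota M → I.rankSum M0 ≤ I.rankSum M := by
  obtain ⟨M0, hM0, hmin⟩ := (InvImage.wf I.rankSum wellFounded_lt).has_min _ hex
  exact ⟨M0, hM0, fun M hM => not_lt.mp (hmin M hM)⟩

variable [DecidableEq R] {M0 : R → Option H} {r r' : R} {h : H}

lemma ExactLowerQuota.comp_swap (hM0 : I.ExactLowerQuota M0) (hr : M0 r = none)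
    (hr' : M0 r' = some h) (hE : I.E r h) : I.ExactLowerQuota (M0 ∘ Equiv.swap r r') := by
  refine ⟨fun x g hx => ?_, fun g => ?_⟩
  · rcases eq_or_ne x r with rfl | hxr
    · simp only [Function.comp, Equiv.swap_apply_left, hr'] at hx
      exact Option.some.inj hx ▸ hE
    rcases eq_or_ne x r' with rfl | hxr'
    · simp [hr] at hx
    · exact hM0.1 x g (by simpa [Equiv.swap_apply_of_ne_of_ne hxr hxr'] using hx)
  · rw [← hM0.2 g]
    exact Set.ncard_preimage_of_injective_subset_range (s := matchedTo M0 g)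
      (Equiv.swap r r').injective (by simp)

lemma rankSum_comp_swap [Fintype R] (hr : M0 r = none) (hr' : M0 r' = some h) :
    I.rankSum (M0 ∘ Equiv.swap r r') + I.hPref h r' = I.rankSum M0 + I.hPref h r := by
  have hne : r ≠ r' := by rintro rfl; simp [hr] at hr'
  have hrest : ∑ x ∈ {r, r'}ᶜ, (M0 (Equiv.swap r r' x)).elim 0 (I.hPref · x) =
      ∑ x ∈ {r, r'}ᶜ, (M0 x).elim 0 (I.hPref · x) := by
    refine Finset.sum_congr rfl fun x hx => ?_
    simp only [Finset.mem_compl, Finset.mem_insert, Finset.mem_singleton, not_or] at hx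
    rw [Equiv.swap_apply_of_ne_of_ne hx.1 hx.2]
  rw [rankSum, rankSum, ← Finset.sum_add_sum_compl {r, r'},
    ← Finset.sum_add_sum_compl {r, r'}, Function.comp_def, hrest, Finset.sum_pair hne,
    Finset.sum_pair hne]
  simp only [Equiv.swap_apply_left, Equiv.swap_apply_right, hr, hr', Option.elim_some,
    Option.elim_none]
  omega

/-- Exchanging an unassigned blocking resident for a worse assigned one lowers the rank sum. -/
lemma not_blocks_of_forall_rankSum_le [Fintype R] [Fintype H] [DecidableEq H]
    {M : R → Option H} (hM0 : I.ExactLowerQuota M0)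
    (hmin : ∀ M, I.ExactLowerQuota M → I.rankSum M0 ≤ I.rankSum M)
    (hst : (I.anchor M0).Stable M) (hr : M0 r = none) : ¬ I.Blocks M r h := by
  intro hb
  obtain ⟨r', hr', hlt⟩ := I.exists_anchored_of_blocks hst hr hb
  have hle := hmin _ (hM0.comp_swap hr hr' hb.1)
  have hswap := I.rankSum_comp_swap hr hr'
  omega

end Exchange

end HRLQ

/-- Every HRLQ instance admitting a feasible matching
admits a feasible relaxed stable matching. -/
theorem exists_feasible_relaxed_stable
    {R H : Type} [Fintype R] [Fintype H] (I : HRLQ R H)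
    (hstrict : I.StrictPrefs)
    (hfeas : ∃ M, I.IsMatching M ∧ I.Feasible M) :
    ∃ M, I.IsMatching M ∧ I.Feasible M ∧ I.RelaxedStable M := by
  classical
  obtain ⟨Mf, hMf, hMf_feas⟩ := hfeas
  obtain ⟨M0, hM0, hmin⟩ :=
    HRLQ.exists_exactLowerQuota_forall_rankSum_le (HRLQ.exists_exactLowerQuota hMf hMf_feas)
  obtain ⟨M, hM, hst⟩ :=
    (I.anchor M0).exists_isMatching_stable (I.anchor_hPref_injective hstrict.2)
  have hsub : ∀ h, HRLQ.matchedTo M0 h ⊆ HRLQ.matchedTo M h :=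
    I.matchedTo_subset_of_anchor_stable
      (fun h => (hM0.2 h).trans_le ((hMf_feas h).trans (hMf.2 h))) hM hst
  exact ⟨M, I.isMatching_of_anchor hM0.1 hM, HRLQ.feasible_of_subset hsub fun h => (hM0.2 h).ge,
    HRLQ.relaxedStable_of_subset hsub (fun h => (hM0.2 h).le)
      fun r h hr => HRLQ.not_blocks_of_forall_rankSum_le hM0 hmin hst hr⟩
end

section
/- Let M and OPT be matchings in a bipartite graph whose vertices on one side (hospitals) have unit capacity. If the symmetric difference M ⊕ OPT contains no augmenting path of length 1 and no augmenting path of length 3 with respect to M, then |OPT| ≤ (3/2)·|M|. -/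
/-!
Let `A` and `B` be the residents matched by `OPT` and by `M`, and let `p` send a resident to the
`M`-partner of its `OPT`-hospital; since `OPT` is a matching, `p` is injective where defined.
For `x ∈ A \ B` the absence of augmenting paths of length 1 makes `p x ∈ B` defined, and if
moreover `p x ∈ A`, the absence of augmenting paths of length 3 makes `p (p x) ∈ B` defined.
The images `p '' (A \ B)` and `p '' (p '' X₁)` (with `X₁ ⊆ A \ B` where `p x ∈ A`) are disjoint
subsets of `B`, while `p` maps the rest of `A \ B` into `B \ A`. Hence
`2 |A \ B| ≤ |B| + |B \ A|`, which gives `2 |A| ≤ 3 |B|`.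
-/

open Set

theorem two_mul_ncard_le_three_mul_ncard_of_injOn {α : Type*} [Finite α] {A B S : Set α}
    {p : α → α} (hp : InjOn p S) (hpS : MapsTo p S B) (hAB : A \ B ⊆ S)
    (hpA : ∀ x ∈ A \ B, p x ∈ A → p x ∈ S) :
    2 * A.ncard ≤ 3 * B.ncard := by
  set X₁ := {x ∈ A \ B | p x ∈ A}
  have hX₁ : X₁ ⊆ A \ B := sep_subset _ _
  have hpX₁ : p '' X₁ ⊆ S := image_subset_iff.2 fun x hx => hpA x hx.1 hx.2
  have hpX₁B : p '' X₁ ⊆ B := (image_mono hX₁).trans <| image_subset_iff.2 (hpS.mono_left hAB)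
  have hdisj : Disjoint (p '' (A \ B)) (p '' (p '' X₁)) := by
    rw [disjoint_iff_inter_eq_empty, ← hp.image_inter hAB hpX₁,
      disjoint_iff_inter_eq_empty.1 (disjoint_sdiff_left.mono_right hpX₁B), image_empty]
  have hcover : (A \ B).ncard + X₁.ncard ≤ B.ncard := by
    rw [← (hp.mono hAB).ncard_image, ← (hp.mono (hX₁.trans hAB)).ncard_image,
      ← (hp.mono hpX₁).ncard_image, ← ncard_union_eq hdisj]
    refine ncard_le_ncard (union_subset ?_ ?_)
    · exact image_subset_iff.2 (hpS.mono_left hAB)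
    · exact image_subset_iff.2 (hpS.mono_left hpX₁)
  have hrest : ((A \ B) \ X₁).ncard ≤ (B \ A).ncard := by
    rw [← (hp.mono (sdiff_subset.trans hAB)).ncard_image]
    exact ncard_le_ncard fun _ ⟨x, hx, hpx⟩ => hpx ▸ ⟨hpS (hAB hx.1), fun hA => hx.2 ⟨hx.1, hA⟩⟩
  have hX := ncard_sdiff_add_ncard_of_subset hX₁
  have hA := ncard_inter_add_ncard_sdiff_eq_ncard A B
  have hB := ncard_inter_add_ncard_sdiff_eq_ncard B A
  rw [inter_comm] at hB
  omega

theorem no_short_augmenting_paths_implies_three_halves_general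
    {R H : Type} [Fintype R] (M OPT : R → Option H)
    (hOPT : ∀ r r' h, OPT r = some h → OPT r' = some h → r = r')
    (h1 : ¬ ∃ r h, OPT r = some h ∧ M r = none ∧ ∀ r', M r' ≠ some h)
    (h3 : ¬ ∃ r₁ r₂ h₁ h₂, OPT r₁ = some h₁ ∧ M r₁ = none ∧ M r₂ = some h₁ ∧
            OPT r₂ = some h₂ ∧ ∀ r', M r' ≠ some h₂) :
    2 * HRLQ.msize OPT ≤ 3 * HRLQ.msize M := by
  push Not at h1 h3
  set S := {r | OPT r ≠ none ∧ ∃ r', M r' = OPT r}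
  choose! p hp using fun r (hr : r ∈ S) => hr.2
  have hinj : InjOn p S := fun r hr r' hr' he => by
    obtain ⟨h, hh⟩ := Option.ne_none_iff_exists'.1 hr.1
    exact hOPT r r' h hh (by rw [← hp r' hr', ← he, hp r hr, hh])
  have hmaps : MapsTo p S {r | M r ≠ none} := fun r hr => by
    simpa [hp r hr] using hr.1
  have hlen1 : {r | OPT r ≠ none} \ {r | M r ≠ none} ⊆ S := fun r ⟨hO, hM⟩ => by
    obtain ⟨h, hh⟩ := Option.ne_none_iff_exists'.1 hO
    obtain ⟨r', hr'⟩ := h1 r h hh (by simpa using hM)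
    exact ⟨hO, r', hr'.trans hh.symm⟩
  refine two_mul_ncard_le_three_mul_ncard_of_injOn hinj hmaps hlen1 fun r hr hpr => ?_
  obtain ⟨h₁, hh₁⟩ := Option.ne_none_iff_exists'.1 hr.1
  obtain ⟨h₂, hh₂⟩ := Option.ne_none_iff_exists'.1 hpr
  obtain ⟨r', hr'⟩ := h3 r (p r) h₁ h₂ hh₁ (by simpa using hr.2) (by rw [hp r (hlen1 hr), hh₁]) hh₂
  exact ⟨hpr, r', hr'.trans hh₂.symm⟩

/-- If the symmetric difference of matchings M and OPT in a bipartite graph with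
unit hospital capacities contains no augmenting path of length 1 or 3 w.r.t. M,
then |OPT| ≤ (3/2)·|M|. -/
theorem no_short_augmenting_paths_implies_three_halves
    {R H : Type} [Fintype R] (M OPT : R → Option H)
    (hM : ∀ r r' h, M r = some h → M r' = some h → r = r')
    (hOPT : ∀ r r' h, OPT r = some h → OPT r' = some h → r = r')
    (h1 : ¬ ∃ r h, OPT r = some h ∧ M r = none ∧ ∀ r', M r' ≠ some h)
    (h3 : ¬ ∃ r₁ r₂ h₁ h₂, OPT r₁ = some h₁ ∧ M r₁ = none ∧ M r₂ = some h₁ ∧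
            OPT r₂ = some h₂ ∧ ∀ r', M r' ≠ some h₂) :
    2 * HRLQ.msize OPT ≤ 3 * HRLQ.msize M :=
  no_short_augmenting_paths_implies_three_halves_general M OPT hOPT h1 h3
end

section
/- In an HRLQ instance where every resident's preference list has length at most ℓ₁ and every hospital has lower and upper quota at most 1, every maximal feasible envy-free matching M satisfies |OPT| ≤ ℓ₁·|M|, where OPT is a maximum-size feasible envy-free matching. (In particular, a maximal envy-free matching is an ℓ₁-approximation of MAXEFM.) -/
/-!
As upper quotas are at most 1, `OPT` matches distinct residents to distinct hospitals, so
`|OPT|` is the number of hospitals matched in `OPT`. Each such hospital `h` has a neighbour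
matched in `M`: otherwise `h` is unmatched in `M` and so is its most preferred neighbour, who
could then be added to `M` at `h` keeping it an envy-free matching, against maximality. Every
resident has at most `ℓ₁` neighbours, so these hospitals number at most `ℓ₁ * |M|`.
-/

theorem ncard_le_mul_ncard_of_forall_exists_rel {α β : Type*} [Finite β] (rel : α → β → Prop)
    {S : Set α} (hS : S.Finite) {A : Set β} {ℓ : ℕ} (hdeg : ∀ a ∈ S, {b | rel a b}.ncard ≤ ℓ)
    (hA : ∀ b ∈ A, ∃ a ∈ S, rel a b) : A.ncard ≤ ℓ * S.ncard :=
  calc A.ncard ≤ (⋃ a ∈ hS.toFinset, {b | rel a b}).ncard :=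
        Set.ncard_le_ncard (fun b hb => by simpa using hA b hb)
    _ ≤ ∑ a ∈ hS.toFinset, {b | rel a b}.ncard := Finset.set_ncard_biUnion_le _ _
    _ ≤ ∑ _a ∈ hS.toFinset, ℓ := Finset.sum_le_sum fun a ha => hdeg a (by simpa using ha)
    _ = ℓ * S.ncard := by
      rw [Finset.sum_const, smul_eq_mul, Set.ncard_eq_toFinset_card S hS, mul_comm]

namespace HRLQ

variable {R H : Type} {I : HRLQ R H} {M : R → Option H} {r : R} {h : H}

theorem one_le_uq_of_eq_some [Finite R] (hM : I.IsMatching M) (hr : M r = some h) :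
    1 ≤ I.uq h :=
  ((Set.ncard_pos (Set.toFinite _)).mpr ⟨r, hr⟩).trans_le (hM.2 h)

theorem injOn_of_uq_le_one [Finite R] (hM : I.IsMatching M) (hq : ∀ h, I.uq h ≤ 1) :
    Set.InjOn M {r | M r ≠ none} := by
  intro r₁ hr₁ r₂ _ h₁₂
  obtain ⟨h, hh⟩ := Option.ne_none_iff_exists'.mp hr₁
  by_contra hne
  have hpair : ({r₁, r₂} : Set R) ⊆ matchedTo M h := by
    rintro x (rfl | rfl)
    exacts [hh, h₁₂.symm.trans hh]
  have htwo := (Set.ncard_pair hne).symm.trans_le ((Set.ncard_le_ncard hpair).trans (hM.2 h))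
  have hone := hq h
  omega

theorem msize_eq_ncard_of_uq_le_one [Finite R] (hM : I.IsMatching M) (hq : ∀ h, I.uq h ≤ 1) :
    msize M = {h | ∃ r, M r = some h}.ncard := by
  have himage : M '' {r | M r ≠ none} = some '' {h | ∃ r, M r = some h} := by
    ext o
    constructor
    · rintro ⟨r, hr, rfl⟩
      obtain ⟨h, hh⟩ := Option.ne_none_iff_exists'.mp hr
      exact ⟨h, ⟨r, hh⟩, hh.symm⟩
    · rintro ⟨h, ⟨r, hr⟩, rfl⟩
      exact ⟨r, by simp [hr], hr⟩
  rw [msize, ← (injOn_of_uq_le_one hM hq).ncard_image, himage,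
    Set.ncard_image_of_injective _ (Option.some_injective H)]

variable [DecidableEq R]

theorem isMatching_update_of_forall_ne [Finite R] (hM : I.IsMatching M)
    (hfree : ∀ r', M r' ≠ some h) (hE : I.E r h) (huq : 1 ≤ I.uq h) :
    I.IsMatching (Function.update M r (some h)) := by
  refine ⟨fun x h' hx => ?_, fun h' => ?_⟩
  · rcases eq_or_ne x r with rfl | hxr
    · rw [Function.update_self, Option.some_inj] at hx
      exact hx ▸ hE
    · exact hM.1 x h' (by rwa [Function.update_of_ne hxr] at hx)
  rcases eq_or_ne h' h with rfl | hne
  · have hsingle : matchedTo (Function.update M r (some h')) h' = {r} := by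
      ext x
      rcases eq_or_ne x r with rfl | hxr
      · simp [matchedTo]
      · simp [matchedTo, hfree x, hxr]
    rwa [hsingle, Set.ncard_singleton]
  · refine le_trans (Set.ncard_le_ncard fun x hx => ?_) (hM.2 h')
    rcases eq_or_ne x r with rfl | hxr
    · simp [matchedTo, hne.symm] at hx
    · simpa [matchedTo, Function.update_of_ne hxr] using hx

theorem envyFree_update_of_forall_hPref_le (hM : I.EnvyFree M) (hr : M r = none)
    (hmin : ∀ a, I.E a h → I.hPref h r ≤ I.hPref h a) :
    I.EnvyFree (Function.update M r (some h)) := by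
  rintro a b ⟨h', hb, hpref, hrank⟩
  rcases eq_or_ne b r with rfl | hbr
  · rw [Function.update_self, Option.some_inj] at hb
    subst hb
    exact (hmin a hpref.1).not_gt hrank
  rw [Function.update_of_ne hbr] at hb
  rcases eq_or_ne a r with rfl | har
  · exact hM a b ⟨h', hb, ⟨hpref.1, fun _ hc => by simp [hr] at hc⟩, hrank⟩
  · rw [Function.update_of_ne har] at hpref
    exact hM a b ⟨h', hb, hpref, hrank⟩

theorem exists_matched_adj_of_maximal [Finite R] (hM : I.IsMatching M) (hef : I.EnvyFree M)
    (hmax : ∀ r h, M r = none → I.E r h →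
      ¬ (I.IsMatching (Function.update M r (some h)) ∧
         I.EnvyFree (Function.update M r (some h))))
    (huq : 1 ≤ I.uq h) (hE : I.E r h) : ∃ r', M r' ≠ none ∧ I.E r' h := by
  by_cases hmatched : ∃ r', M r' = some h
  · obtain ⟨r', hr'⟩ := hmatched
    exact ⟨r', by simp [hr'], hM.1 r' h hr'⟩
  push Not at hmatched
  obtain ⟨r₀, hE₀, hmin⟩ :=
    Set.exists_min_image {a | I.E a h} (I.hPref h) (Set.toFinite _) ⟨r, hE⟩
  refine ⟨r₀, fun hnone => hmax r₀ h hnone hE₀ ⟨?_, ?_⟩, hE₀⟩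
  · exact isMatching_update_of_forall_ne hM hmatched hE₀ huq
  · exact envyFree_update_of_forall_hPref_le hef hnone hmin

end HRLQ

theorem maximal_envy_free_ell1_approx_general
    {R H : Type} [Fintype R] [Fintype H] [DecidableEq R] (I : HRLQ R H)
    (ℓ₁ : ℕ)
    (hlen : ∀ r, {h | I.E r h}.ncard ≤ ℓ₁)
    (hq : ∀ h, I.lq h ≤ 1 ∧ I.uq h ≤ 1)
    (M : R → Option H)
    (hM : I.IsMatching M ∧ I.Feasible M ∧ I.EnvyFree M)
    (hmaximal : ∀ r h, M r = none → I.E r h →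
      ¬ (I.IsMatching (Function.update M r (some h)) ∧
         I.EnvyFree (Function.update M r (some h)))) :
    ∀ OPT, I.IsMatching OPT → I.Feasible OPT → I.EnvyFree OPT →
      HRLQ.msize OPT ≤ ℓ₁ * HRLQ.msize M := by
  intro OPT hOPT _ _
  obtain ⟨hMm, -, hMe⟩ := hM
  calc HRLQ.msize OPT = {h | ∃ r, OPT r = some h}.ncard :=
        HRLQ.msize_eq_ncard_of_uq_le_one hOPT fun h => (hq h).2
    _ ≤ ℓ₁ * HRLQ.msize M :=
        ncard_le_mul_ncard_of_forall_exists_rel I.E (Set.toFinite _) (fun r _ => hlen r)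
          fun h ⟨r, hr⟩ => HRLQ.exists_matched_adj_of_maximal hMm hMe hmaximal
            (HRLQ.one_le_uq_of_eq_some hOPT hr) (hOPT.1 r h hr)

/-- In an HRLQ instance with resident lists of length at most ℓ₁ and all hospital
quotas at most 1, every maximal feasible envy-free matching M is an
ℓ₁-approximation of a maximum-size feasible envy-free matching. -/
theorem maximal_envy_free_ell1_approx
    {R H : Type} [Fintype R] [Fintype H] [DecidableEq R] (I : HRLQ R H)
    (hstrict : I.StrictPrefs) (ℓ₁ : ℕ)
    (hlen : ∀ r, {h | I.E r h}.ncard ≤ ℓ₁)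
    (hq : ∀ h, I.lq h ≤ 1 ∧ I.uq h ≤ 1)
    (M : R → Option H)
    (hM : I.IsMatching M ∧ I.Feasible M ∧ I.EnvyFree M)
    (hmaximal : ∀ r h, M r = none → I.E r h →
      ¬ (I.IsMatching (Function.update M r (some h)) ∧
         I.EnvyFree (Function.update M r (some h)))) :
    ∀ OPT, I.IsMatching OPT → I.Feasible OPT → I.EnvyFree OPT →
      HRLQ.msize OPT ≤ ℓ₁ * HRLQ.msize M :=
  maximal_envy_free_ell1_approx_general I ℓ₁ hlen hq M hM hmaximal
end

section
/- In a graph G=(V,E) with |V|=n, |E|=m, construct the HRLQ instance G' with one resident r_i per vertex v_i (list: h_i, x), one resident r'_j per edge e_j (list: the two hospitals of its endpoints in some order), hospitals h_i with quotas [0, |E_i|+1] (list: r_i followed by the edge-residents of edges E_i incident on v_i), and hospital x with quotas [k,k] (list: all vertex-residents). Then G has an independent set of size k if and only if G' admits a feasible envy-free matching of size m+n. -/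
/-!
Given an independent set `S` of size `k`, send the vertex residents of `S` to `x`, every other
vertex resident to its own hospital, and each edge resident to its favourite endpoint outside `S`
(one exists by independence). The hospitals `hᵥ` with `v ∈ S` stay empty, so nobody envies.
Conversely, a matching of size `m + n` matches everybody, and the `k` vertex residents at `x` form
an independent set: the resident of an edge between two of them sits at some endpoint's hospital
`hᵤ`, and `rᵤ`, who prefers `hᵤ` to `x` and is preferred by `hᵤ`, would envy it.
-/

open Sum

namespace HRLQ

variable {R H : Type}

theorem msize_eq_card_iff [Finite R] (M : R → Option H) :
    msize M = Nat.card R ↔ ∀ r, M r ≠ none := by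
  rw [msize, ← Set.ncard_univ]
  constructor
  · intro hM r hr
    have hne : {r | M r ≠ none} ≠ Set.univ := fun h => Set.eq_univ_iff_forall.1 h r hr
    exact (Set.ncard_lt_card hne).ne (hM.trans (Set.ncard_univ R))
  · intro hM
    rw [show {r | M r ≠ none} = Set.univ from Set.eq_univ_of_forall hM]

end HRLQ

namespace SimpleGraph

theorem ncard_incident_edges {V : Type} [Fintype V] [DecidableEq V] (G : SimpleGraph V)
    [DecidableRel G.Adj] (v : V) : {e : G.edgeSet | v ∈ (e : Sym2 V)}.ncard = G.degree v := by
  have himage : Subtype.val '' {e : G.edgeSet | v ∈ (e : Sym2 V)} = G.incidenceSet v := by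
    ext e
    simp [incidenceSet, and_comm]
  rw [← Set.ncard_image_of_injective _ Subtype.val_injective, himage, ← Nat.card_coe_set_eq,
    Nat.card_eq_fintype_card, card_incidenceSet_eq_degree]

theorem exists_min_endpoint_not_mem {V : Type} [Finite V] {G : SimpleGraph V}
    {S : Finset V} (hS : ∀ u ∈ S, ∀ w ∈ S, ¬ G.Adj u w) (e : G.edgeSet) (ρ : V → ℕ) :
    ∃ u ∈ (e : Sym2 V), u ∉ S ∧ ∀ w ∈ (e : Sym2 V), w ∉ S → ρ u ≤ ρ w := by
  have hne : {u | u ∈ (e : Sym2 V) ∧ u ∉ S}.Nonempty := by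
    obtain ⟨e, he⟩ := e
    induction e using Sym2.ind with
    | _ a b =>
      by_contra! h
      simp only [Set.eq_empty_iff_forall_notMem, Set.mem_ofPred_eq, not_and, not_not] at h
      exact hS a (h a (Sym2.mem_mk_left a b)) b (h b (Sym2.mem_mk_right a b)) he
  obtain ⟨u, ⟨hue, huS⟩, hmin⟩ := Set.exists_min_image _ ρ (Set.toFinite _) hne
  exact ⟨u, hue, huS, fun w hw hwS => hmin w ⟨hw, hwS⟩⟩

end SimpleGraph

section IndepSetMatching

variable {V : Type} [DecidableEq V] {G : SimpleGraph V}

def indepSetMatching (S : Finset V) (f : G.edgeSet → V) : V ⊕ G.edgeSet → Option (V ⊕ Unit) :=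
  Sum.elim (fun v => some (if v ∈ S then inr () else inl v)) (fun e => some (inl (f e)))

variable {S : Finset V} {f : G.edgeSet → V}

@[simp]
theorem indepSetMatching_inl (v : V) :
    indepSetMatching S f (inl v) = some (if v ∈ S then inr () else inl v) := rfl

@[simp]
theorem indepSetMatching_inr (e : G.edgeSet) : indepSetMatching S f (inr e) = some (inl (f e)) :=
  rfl

theorem matchedTo_indepSetMatching_inr :
    HRLQ.matchedTo (indepSetMatching S f) (inr ()) = inl '' S := by
  ext (v | e)
  · by_cases hv : v ∈ S <;> simp [HRLQ.matchedTo, hv]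
  · simp [HRLQ.matchedTo]

theorem ncard_matchedTo_indepSetMatching_inr :
    (HRLQ.matchedTo (indepSetMatching S f) (inr ())).ncard = S.card := by
  rw [matchedTo_indepSetMatching_inr, Set.ncard_image_of_injective _ inl_injective,
    Set.ncard_coe_finset]

theorem msize_indepSetMatching [Finite V] [Finite G.edgeSet] :
    HRLQ.msize (indepSetMatching S f) = Nat.card (V ⊕ G.edgeSet) :=
  (HRLQ.msize_eq_card_iff _).2 (by rintro (v | e) <;> simp)

theorem matchedTo_indepSetMatching_inl_of_mem (hf : ∀ e, f e ∉ S) {u : V} (hu : u ∈ S) :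
    HRLQ.matchedTo (indepSetMatching S f) (inl u) = ∅ := by
  ext (v | e)
  · by_cases hv : v ∈ S
    · simp [HRLQ.matchedTo, hv]
    · simp only [HRLQ.matchedTo, Set.mem_ofPred_eq, indepSetMatching_inl, hv, if_false,
        Option.some.injEq, inl.injEq, Set.mem_empty_iff_false, iff_false]
      rintro rfl
      exact hv hu
  · simp only [HRLQ.matchedTo, Set.mem_ofPred_eq, indepSetMatching_inr, Option.some.injEq,
      inl.injEq, Set.mem_empty_iff_false, iff_false]
    rintro rfl
    exact hf e hu

theorem ncard_matchedTo_indepSetMatching_inl_le [Fintype V] [DecidableRel G.Adj]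
    (hf : ∀ e : G.edgeSet, f e ∈ (e : Sym2 V)) (v : V) :
    (HRLQ.matchedTo (indepSetMatching S f) (inl v)).ncard ≤ G.degree v + 1 := by
  have hsub : HRLQ.matchedTo (indepSetMatching S f) (inl v) ⊆
      insert (inl v) (inr '' {e : G.edgeSet | v ∈ (e : Sym2 V)}) := by
    rintro (w | e) h
    · by_cases hw : w ∈ S <;> simp_all [HRLQ.matchedTo]
    · simp only [HRLQ.matchedTo, Set.mem_ofPred_eq, indepSetMatching_inr, Option.some.injEq,
        inl.injEq] at h
      exact Set.mem_insert_of_mem _ ⟨e, h ▸ hf e, rfl⟩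
  calc (HRLQ.matchedTo (indepSetMatching S f) (inl v)).ncard
      ≤ (insert (inl v) (inr '' {e : G.edgeSet | v ∈ (e : Sym2 V)})).ncard :=
        Set.ncard_le_ncard hsub (Set.toFinite _)
    _ ≤ (inr '' {e : G.edgeSet | v ∈ (e : Sym2 V)} : Set (V ⊕ G.edgeSet)).ncard + 1 :=
        Set.ncard_insert_le _ _
    _ = G.degree v + 1 := by
        rw [Set.ncard_image_of_injective _ inr_injective, G.ncard_incident_edges]

end IndepSetMatching

/-- Resident `inl v` is `rᵥ` and `inr e` is `r'ₑ`; hospital `inl v` is `hᵥ` and `inr ()` is `x`. -/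
structure IsIndepSetReduction {V : Type} [Fintype V] (G : SimpleGraph V) [DecidableRel G.Adj]
    (k : ℕ) (I : HRLQ (V ⊕ G.edgeSet) (V ⊕ Unit)) : Prop where
  acc_inl_inl : ∀ v u, I.E (inl v) (inl u) ↔ v = u
  acc_inl_inr : ∀ v, I.E (inl v) (inr ())
  acc_inr_inl : ∀ (e : G.edgeSet) u, I.E (inr e) (inl u) ↔ u ∈ (e : Sym2 V)
  not_acc_inr_inr : ∀ e : G.edgeSet, ¬ I.E (inr e) (inr ())
  rPref_inl : ∀ v, I.rPref (inl v) (inl v) < I.rPref (inl v) (inr ())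
  hPref_inl : ∀ v (e : G.edgeSet), v ∈ (e : Sym2 V) →
    I.hPref (inl v) (inl v) < I.hPref (inl v) (inr e)
  lq_inl : ∀ v, I.lq (inl v) = 0
  uq_inl : ∀ v, I.uq (inl v) = G.degree v + 1
  lq_inr : I.lq (inr ()) = k
  uq_inr : I.uq (inr ()) = k

namespace IsIndepSetReduction

variable {V : Type} [Fintype V] {G : SimpleGraph V} [DecidableRel G.Adj] {k : ℕ}
  {I : HRLQ (V ⊕ G.edgeSet) (V ⊕ Unit)}

theorem matchedTo_inr_eq (hI : IsIndepSetReduction G k I) {M : V ⊕ G.edgeSet → Option (V ⊕ Unit)}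
    (hM : I.IsMatching M) :
    HRLQ.matchedTo M (inr ()) = inl '' {v | M (inl v) = some (inr ())} := by
  ext (v | e)
  · simp [HRLQ.matchedTo]
  · simp only [HRLQ.matchedTo, Set.mem_ofPred_eq, Set.mem_image, reduceCtorEq, and_false,
      exists_false, iff_false]
    exact fun h => hI.not_acc_inr_inr e (hM.1 _ _ h)

theorem not_adj_of_envyFree (hI : IsIndepSetReduction G k I)
    {M : V ⊕ G.edgeSet → Option (V ⊕ Unit)} (hM : I.IsMatching M) (hEF : I.EnvyFree M)
    (hmatched : ∀ e : G.edgeSet, M (inr e) ≠ none) {u w : V}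
    (hu : M (inl u) = some (inr ())) (hw : M (inl w) = some (inr ())) : ¬ G.Adj u w := by
  intro hadj
  set e : G.edgeSet := ⟨s(u, w), hadj⟩
  obtain ⟨a | ⟨⟩, hMe⟩ := Option.ne_none_iff_exists'.1 (hmatched e)
  · have hae : a ∈ s(u, w) := (hI.acc_inr_inl e a).1 (hM.1 _ _ hMe)
    have ha : M (inl a) = some (inr ()) := by
      rcases Sym2.mem_iff.1 hae with rfl | rfl <;> assumption
    refine hEF (inl a) (inr e) ⟨inl a, hMe, ⟨(hI.acc_inl_inl a a).2 rfl, ?_⟩, hI.hPref_inl a e hae⟩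
    rintro _ hx
    obtain rfl := Option.some.inj (ha.symm.trans hx)
    exact hI.rPref_inl a
  · exact hI.not_acc_inr_inr e (hM.1 _ _ hMe)

theorem exists_indepSet_of_envyFree (hI : IsIndepSetReduction G k I)
    {M : V ⊕ G.edgeSet → Option (V ⊕ Unit)} (hM : I.IsMatching M) (hF : I.Feasible M)
    (hEF : I.EnvyFree M) (hsize : HRLQ.msize M = Nat.card (V ⊕ G.edgeSet)) :
    ∃ S : Finset V, S.card = k ∧ ∀ u ∈ S, ∀ w ∈ S, ¬ G.Adj u w := by
  classical
  have hcard : {v | M (inl v) = some (inr ())}.ncard = k := by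
    have hx : (HRLQ.matchedTo M (inr ())).ncard = k :=
      le_antisymm (hI.uq_inr ▸ hM.2 (inr ())) (hI.lq_inr ▸ hF (inr ()))
    rwa [hI.matchedTo_inr_eq hM, Set.ncard_image_of_injective _ inl_injective] at hx
  have hmatched := (HRLQ.msize_eq_card_iff M).1 hsize
  refine ⟨{v | M (inl v) = some (inr ())}.toFinset, by rwa [← Set.ncard_eq_toFinset_card'], ?_⟩
  intro u hu w hw
  rw [Set.mem_toFinset] at hu hw
  exact hI.not_adj_of_envyFree hM hEF (fun e => hmatched (inr e)) hu hw

variable [DecidableEq V] {S : Finset V} {f : G.edgeSet → V}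

theorem isMatching_indepSetMatching (hI : IsIndepSetReduction G k I) (hS : S.card = k)
    (hf : ∀ e : G.edgeSet, f e ∈ (e : Sym2 V)) : I.IsMatching (indepSetMatching S f) := by
  refine ⟨?_, ?_⟩
  · rintro (v | e) h hM
    · by_cases hv : v ∈ S <;> simp only [indepSetMatching_inl, hv, if_true, if_false,
        Option.some.injEq] at hM <;> subst hM
      · exact hI.acc_inl_inr v
      · exact (hI.acc_inl_inl v v).2 rfl
    · simp only [indepSetMatching_inr, Option.some.injEq] at hM
      exact hM ▸ (hI.acc_inr_inl e (f e)).2 (hf e)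
  · rintro (v | ⟨⟩)
    · rw [hI.uq_inl]
      exact ncard_matchedTo_indepSetMatching_inl_le hf v
    · rw [hI.uq_inr, ncard_matchedTo_indepSetMatching_inr, hS]

theorem feasible_indepSetMatching (hI : IsIndepSetReduction G k I) (hS : S.card = k) :
    I.Feasible (indepSetMatching S f) := by
  rintro (v | ⟨⟩)
  · rw [hI.lq_inl]
    exact Nat.zero_le _
  · rw [hI.lq_inr, ncard_matchedTo_indepSetMatching_inr, hS]

theorem envyFree_indepSetMatching (hI : IsIndepSetReduction G k I) (hf_out : ∀ e, f e ∉ S)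
    (hf_best : ∀ (e : G.edgeSet), ∀ u ∈ (e : Sym2 V), u ∉ S →
      I.rPref (inr e) (inl (f e)) ≤ I.rPref (inr e) (inl u)) :
    I.EnvyFree (indepSetMatching S f) := by
  rintro r r' ⟨h, hr', ⟨hacc, hpref⟩, -⟩
  have hne : ∀ u ∈ S, h ≠ inl u := by
    rintro u hu rfl
    have : r' ∈ HRLQ.matchedTo (indepSetMatching S f) (inl u) := hr'
    rwa [matchedTo_indepSetMatching_inl_of_mem hf_out hu] at this
  rcases r with v | e <;> rcases h with u | ⟨⟩
  · obtain rfl := (hI.acc_inl_inl v u).1 hacc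
    have hv : v ∉ S := fun hv => hne v hv rfl
    exact lt_irrefl _ (hpref (inl v) (by simp [hv]))
  · by_cases hv : v ∈ S
    · exact lt_irrefl _ (hpref _ (by simp [hv]))
    · exact (hI.rPref_inl v).not_gt (hpref _ (by simp [hv]))
  · have hu : u ∉ S := fun hu => hne u hu rfl
    exact (hf_best e u ((hI.acc_inr_inl e u).1 hacc) hu).not_gt (hpref _ rfl)
  · exact hI.not_acc_inr_inr e hacc

theorem exists_envyFree_of_indepSet (hI : IsIndepSetReduction G k I) (hS : S.card = k)
    (hind : ∀ u ∈ S, ∀ w ∈ S, ¬ G.Adj u w) :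
    ∃ M, I.IsMatching M ∧ I.Feasible M ∧ I.EnvyFree M ∧
      HRLQ.msize M = Nat.card (V ⊕ G.edgeSet) := by
  choose f hf_mem hf_out hf_best using
    fun e => G.exists_min_endpoint_not_mem hind e (fun u => I.rPref (inr e) (inl u))
  exact ⟨indepSetMatching S f, hI.isMatching_indepSetMatching hS hf_mem,
    hI.feasible_indepSetMatching hS, hI.envyFree_indepSetMatching hf_out hf_best,
    msize_indepSetMatching⟩

end IsIndepSetReduction

theorem ind_set_iff_envy_free_of_size_m_plus_n_general
    {V : Type} [Fintype V] [DecidableEq V]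
    (G : SimpleGraph V) [DecidableRel G.Adj] (k : ℕ)
    (I : HRLQ (V ⊕ {e : Sym2 V // e ∈ G.edgeSet}) (V ⊕ Unit))
    -- the acceptability (edge) structure of the reduced instance
    (hE1 : ∀ v u, I.E (Sum.inl v) (Sum.inl u) ↔ v = u)
    (hE2 : ∀ v, I.E (Sum.inl v) (Sum.inr ()))
    (hE3 : ∀ (e : {e : Sym2 V // e ∈ G.edgeSet}) u,
      I.E (Sum.inr e) (Sum.inl u) ↔ u ∈ e.1)
    (hE4 : ∀ (e : {e : Sym2 V // e ∈ G.edgeSet}), ¬ I.E (Sum.inr e) (Sum.inr ()))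
    -- vertex-resident rᵢ prefers hᵢ to x
    (hr : ∀ v, I.rPref (Sum.inl v) (Sum.inl v) < I.rPref (Sum.inl v) (Sum.inr ()))
    -- hospital hᵢ prefers rᵢ to every incident edge-resident
    (hh : ∀ v (e : {e : Sym2 V // e ∈ G.edgeSet}), v ∈ e.1 →
      I.hPref (Sum.inl v) (Sum.inl v) < I.hPref (Sum.inl v) (Sum.inr e))
    -- quotas
    (hlq : ∀ v, I.lq (Sum.inl v) = 0)
    (huq : ∀ v, I.uq (Sum.inl v) = G.degree v + 1)
    (hxl : I.lq (Sum.inr ()) = k) (hxu : I.uq (Sum.inr ()) = k) :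
    (∃ S : Finset V, S.card = k ∧ ∀ u ∈ S, ∀ w ∈ S, ¬ G.Adj u w) ↔
    (∃ M, I.IsMatching M ∧ I.Feasible M ∧ I.EnvyFree M ∧
      HRLQ.msize M = G.edgeFinset.card + Fintype.card V) := by
  have hI : IsIndepSetReduction G k I := ⟨hE1, hE2, hE3, hE4, hr, hh, hlq, huq, hxl, hxu⟩
  have hcard : G.edgeFinset.card + Fintype.card V = Nat.card (V ⊕ G.edgeSet) := by
    rw [Nat.card_sum, Nat.card_eq_fintype_card, Nat.card_eq_fintype_card, G.edgeFinset_card,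
      add_comm]
  rw [hcard]
  exact ⟨fun ⟨_, hS, hind⟩ => hI.exists_envyFree_of_indepSet hS hind,
    fun ⟨_, hM, hF, hEF, hsize⟩ => hI.exists_indepSet_of_envyFree hM hF hEF hsize⟩

/-- Reduction from Independent Set to MAXEFM: G has an independent set of size k
iff the reduced HRLQ instance (vertex-residents with list hᵢ, x; edge-residents
with the two endpoint hospitals; hospitals hᵢ with quotas [0,|Eᵢ|+1] and list
rᵢ followed by the incident edge-residents; hospital x with quotas [k,k] and all
vertex-residents) admits a feasible envy-free matching of size m + n. -/
theorem ind_set_iff_envy_free_of_size_m_plus_n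
    {V : Type} [Fintype V] [DecidableEq V]
    (G : SimpleGraph V) [DecidableRel G.Adj] (k : ℕ)
    (I : HRLQ (V ⊕ {e : Sym2 V // e ∈ G.edgeSet}) (V ⊕ Unit))
    (hstrict : I.StrictPrefs)
    -- the acceptability (edge) structure of the reduced instance
    (hE1 : ∀ v u, I.E (Sum.inl v) (Sum.inl u) ↔ v = u)
    (hE2 : ∀ v, I.E (Sum.inl v) (Sum.inr ()))
    (hE3 : ∀ (e : {e : Sym2 V // e ∈ G.edgeSet}) u,
      I.E (Sum.inr e) (Sum.inl u) ↔ u ∈ e.1)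
    (hE4 : ∀ (e : {e : Sym2 V // e ∈ G.edgeSet}), ¬ I.E (Sum.inr e) (Sum.inr ()))
    -- vertex-resident rᵢ prefers hᵢ to x
    (hr : ∀ v, I.rPref (Sum.inl v) (Sum.inl v) < I.rPref (Sum.inl v) (Sum.inr ()))
    -- hospital hᵢ prefers rᵢ to every incident edge-resident
    (hh : ∀ v (e : {e : Sym2 V // e ∈ G.edgeSet}), v ∈ e.1 →
      I.hPref (Sum.inl v) (Sum.inl v) < I.hPref (Sum.inl v) (Sum.inr e))
    -- quotas
    (hlq : ∀ v, I.lq (Sum.inl v) = 0)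
    (huq : ∀ v, I.uq (Sum.inl v) = G.degree v + 1)
    (hxl : I.lq (Sum.inr ()) = k) (hxu : I.uq (Sum.inr ()) = k) :
    (∃ S : Finset V, S.card = k ∧ ∀ u ∈ S, ∀ w ∈ S, ¬ G.Adj u w) ↔
    (∃ M, I.IsMatching M ∧ I.Feasible M ∧ I.EnvyFree M ∧
      HRLQ.msize M = G.edgeFinset.card + Fintype.card V) :=
  ind_set_iff_envy_free_of_size_m_plus_n_general G k I hE1 hE2 hE3 hE4 hr hh hlq huq hxl hxu
end

section
/- In an HRLQ instance where every resident's preference list has length at most 2 and all hospital quotas are at most 1, if M and M* are feasible envy-free matchings with |M*| > |M|, then there exists an augmenting path P with respect to M such that M ⊕ P is envy-free (an envy-free augmenting path). -/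
/-!
Since `|M*| > |M|`, some `M`-unmatched resident starts an alternating path whose non-`M` edges
are `M*`-edges and which ends at an `M`-free hospital. Enter a final segment `hs j, …, hs n` of it
from an `M`-unmatched resident `r` whom `hs j` ranks no worse than its `M*`-partner, with `j`
maximal and then `r` best for `hs j`. Envy towards a resident off this path is envy in `M`, or
gives the envious resident three acceptable hospitals; envy towards a resident on it is envy in
`M*`, or comes from an `M`-unmatched resident giving a better choice of `(j, r)`.
-/

namespace HRLQ

variable {R H : Type} {I : HRLQ R H} {M Ms : R → Option H} {n : ℕ} {rs : ℕ → R} {hs : ℕ → H}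

def MatchInjective (M : R → Option H) : Prop :=
  ∀ ⦃r r' : R⦄ ⦃h : H⦄, M r = some h → M r' = some h → r = r'

lemma IsMatching.matchInjective [Finite R] (hM : I.IsMatching M) (hq : ∀ h, I.uq h ≤ 1) :
    MatchInjective M := by
  intro r r' h hr hr'
  by_contra hne
  have hpair : ({r, r'} : Set R).ncard ≤ (matchedTo M h).ncard :=
    Set.ncard_le_ncard (by rintro x (rfl | rfl) <;> assumption)
  rw [Set.ncard_pair hne] at hpair
  have := (hM.2 h).trans (hq h)
  omega

lemma IsMatching.one_le_uq [Finite R] (hM : I.IsMatching M) {r : R} {h : H}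
    (hr : M r = some h) : 1 ≤ I.uq h :=
  ((Set.ncard_pos (Set.toFinite _)).2 ⟨r, hr⟩).trans_le (hM.2 h)

lemma acceptable_eq_or_eq [Finite H] (hlen : ∀ r, {h | I.E r h}.ncard ≤ 2) {r : R}
    {h₁ h₂ h₃ : H} (e₁ : I.E r h₁) (e₂ : I.E r h₂) (e₃ : I.E r h₃) (h₁₂ : h₁ ≠ h₂) :
    h₃ = h₁ ∨ h₃ = h₂ := by
  by_contra! hne
  have hsub : ({h₃, h₁, h₂} : Set H) ⊆ {h | I.E r h} := by
    rintro x (rfl | rfl | rfl) <;> assumption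
  have hcard := Set.ncard_le_ncard hsub
  rw [Set.ncard_insert_of_notMem (by simp [hne.1, hne.2]), Set.ncard_pair h₁₂] at hcard
  have := hlen r
  omega

lemma EnvyFree.exists_preferred (hMs : I.EnvyFree Ms) (hstrict : I.StrictPrefs)
    (hinj : MatchInjective Ms) {a c : R} {h : H} (hc : Ms c = some h)
    (hac : I.hPref h a < I.hPref h c) (ha : I.E a h) :
    ∃ h', Ms a = some h' ∧ I.rPref a h' < I.rPref a h := by
  by_contra! hno
  refine hMs a c ⟨h, hc, ⟨ha, fun h' hh' => (hno h' hh').lt_of_ne fun heq => ?_⟩, hac⟩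
  obtain rfl := hstrict.1 a heq
  obtain rfl := hinj hh' hc
  exact lt_irrefl _ hac

/-- The path is `rs 0, hs 0, rs 1, hs 1, …, rs n, hs n`; its `M`-edges are `rs (i + 1), hs i`. -/
structure IsAugmentingPath (I : HRLQ R H) (M : R → Option H) (n : ℕ) (rs : ℕ → R)
    (hs : ℕ → H) : Prop where
  start : M (rs 0) = none
  edge : ∀ i ≤ n, I.E (rs i) (hs i)
  matched : ∀ i < n, M (rs (i + 1)) = some (hs i)
  last_free : ∀ r, M r ≠ some (hs n)
  one_le_uq_last : 1 ≤ I.uq (hs n)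
  injOn_rs : Set.InjOn rs (Set.Iic n)
  injOn_hs : Set.InjOn hs (Set.Iic n)

open Classical in
/-- `M ⊕ P` for the path `P` given by `rs` and `hs`. -/
noncomputable def switch (M : R → Option H) (n : ℕ) (rs : ℕ → R) (hs : ℕ → H) :
    R → Option H :=
  fun r => if h : ∃ i ≤ n, rs i = r then some (hs h.choose) else M r

lemma switch_apply_of_forall_ne {r : R} (hr : ∀ i ≤ n, rs i ≠ r) :
    switch M n rs hs r = M r :=
  dif_neg fun ⟨i, hi, he⟩ => hr i hi he

lemma eq_none_of_switch_eq_none {r : R} (hr : switch M n rs hs r = none) : M r = none := by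
  unfold switch at hr
  split_ifs at hr
  exact hr

namespace IsAugmentingPath

lemma switch_apply (hP : I.IsAugmentingPath M n rs hs) {i : ℕ} (hi : i ≤ n) :
    switch M n rs hs (rs i) = some (hs i) := by
  have hex : ∃ j ≤ n, rs j = rs i := ⟨i, hi, rfl⟩
  rw [switch, dif_pos hex, hP.injOn_rs hex.choose_spec.1 hi hex.choose_spec.2]

lemma eq_of_apply_eq_some (hP : I.IsAugmentingPath M n rs hs) (hM : MatchInjective M)
    {r : R} {i : ℕ} (hi : i ≤ n) (hr : M r = some (hs i)) : i < n ∧ r = rs (i + 1) := by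
  rcases hi.lt_or_eq with hlt | rfl
  · exact ⟨hlt, hM hr (hP.matched i hlt)⟩
  · exact absurd hr (hP.last_free r)

lemma ncard_matchedTo_last_lt (hP : I.IsAugmentingPath M n rs hs) :
    (matchedTo M (hs n)).ncard < I.uq (hs n) := by
  have hempty : matchedTo M (hs n) = ∅ := Set.eq_empty_iff_forall_notMem.2 hP.last_free
  rw [hempty, Set.ncard_empty]
  exact hP.one_le_uq_last

lemma one_le_uq [Finite R] (hP : I.IsAugmentingPath M n rs hs) (hM : I.IsMatching M)
    {i : ℕ} (hi : i ≤ n) : 1 ≤ I.uq (hs i) := by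
  rcases hi.lt_or_eq with hlt | rfl
  · exact hM.one_le_uq (hP.matched i hlt)
  · exact hP.one_le_uq_last

lemma matchedTo_switch (hP : I.IsAugmentingPath M n rs hs) (hM : MatchInjective M) {i : ℕ}
    (hi : i ≤ n) : matchedTo (switch M n rs hs) (hs i) = {rs i} := by
  ext r
  refine ⟨fun hr => ?_, fun hr => (Set.mem_singleton_iff.1 hr) ▸ hP.switch_apply hi⟩
  by_cases hon : ∃ k ≤ n, rs k = r
  · obtain ⟨k, hk, rfl⟩ := hon
    have hr : some (hs k) = some (hs i) := (hP.switch_apply hk).symm.trans hr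
    rw [hP.injOn_hs hk hi (Option.some_inj.1 hr)]
    rfl
  · rw [matchedTo, Set.mem_ofPred_eq,
      switch_apply_of_forall_ne fun k hk he => hon ⟨k, hk, he⟩] at hr
    obtain ⟨hlt, rfl⟩ := hP.eq_of_apply_eq_some hM hi hr
    exact absurd ⟨i + 1, hlt, rfl⟩ hon

lemma matchedTo_switch_of_forall_ne (hP : I.IsAugmentingPath M n rs hs) {h : H}
    (hh : ∀ i ≤ n, hs i ≠ h) : matchedTo (switch M n rs hs) h = matchedTo M h := by
  ext r
  by_cases hon : ∃ k ≤ n, rs k = r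
  · obtain ⟨k, hk, rfl⟩ := hon
    have hMk : M (rs k) ≠ some h := by
      cases k with
      | zero => simp [hP.start]
      | succ k => rw [hP.matched k hk]; exact fun he => hh k (by omega) (Option.some_inj.1 he)
    simp [matchedTo, hP.switch_apply hk, hh k hk, hMk]
  · simp only [matchedTo, Set.mem_ofPred_eq,
      switch_apply_of_forall_ne fun k hk he => hon ⟨k, hk, he⟩]

lemma isMatching_switch [Finite R] (hP : I.IsAugmentingPath M n rs hs) (hM : I.IsMatching M)
    (hMinj : MatchInjective M) : I.IsMatching (switch M n rs hs) := by
  refine ⟨fun r h hr => ?_, fun h => ?_⟩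
  · by_cases hon : ∃ k ≤ n, rs k = r
    · obtain ⟨k, hk, rfl⟩ := hon
      rw [hP.switch_apply hk, Option.some_inj] at hr
      exact hr ▸ hP.edge k hk
    · rw [switch_apply_of_forall_ne fun k hk he => hon ⟨k, hk, he⟩] at hr
      exact hM.1 r h hr
  · by_cases hh : ∃ i ≤ n, hs i = h
    · obtain ⟨i, hi, rfl⟩ := hh
      rw [hP.matchedTo_switch hMinj hi, Set.ncard_singleton]
      exact hP.one_le_uq hM hi
    · rw [hP.matchedTo_switch_of_forall_ne fun i hi he => hh ⟨i, hi, he⟩]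
      exact hM.2 h

lemma feasible_switch (hP : I.IsAugmentingPath M n rs hs) (hMinj : MatchInjective M)
    (hMf : I.Feasible M) (hlq : ∀ h, I.lq h ≤ 1) : I.Feasible (switch M n rs hs) := by
  intro h
  by_cases hh : ∃ i ≤ n, hs i = h
  · obtain ⟨i, hi, rfl⟩ := hh
    rw [hP.matchedTo_switch hMinj hi, Set.ncard_singleton]
    exact hlq _
  · rw [hP.matchedTo_switch_of_forall_ne fun i hi he => hh ⟨i, hi, he⟩]
    exact hMf h

/-- Off the path nothing changes, and a resident on the path who envies a resident off it
would have three acceptable hospitals. -/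
lemma exists_eq_of_envies_switch [Finite H] (hP : I.IsAugmentingPath M n rs hs)
    (hlen : ∀ r, {h | I.E r h}.ncard ≤ 2) (hM : I.IsMatching M) (hMinj : MatchInjective M)
    (hMef : I.EnvyFree M) {a b : R} (hab : I.Envies (switch M n rs hs) a b) :
    ∃ i ≤ n, rs i = b := by
  by_contra hoff
  obtain ⟨h, hb, hpref, hrank⟩ := hab
  rw [switch_apply_of_forall_ne fun i hi he => hoff ⟨i, hi, he⟩] at hb
  have hh : ∀ i ≤ n, hs i ≠ h := by
    rintro i hi rfl
    obtain ⟨hlt, rfl⟩ := hP.eq_of_apply_eq_some hMinj hi hb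
    exact hoff ⟨i + 1, hlt, rfl⟩
  by_cases hon : ∃ i ≤ n, rs i = a
  · obtain ⟨i, hi, rfl⟩ := hon
    rw [hP.switch_apply hi] at hpref
    cases i with
    | zero => exact hMef _ b ⟨h, hb, ⟨hpref.1, by simp [hP.start]⟩, hrank⟩
    | succ k =>
      have hne : hs k ≠ hs (k + 1) := fun he =>
        absurd (hP.injOn_hs (show k ≤ n by omega) hi he) (by omega)
      rcases acceptable_eq_or_eq hlen (hM.1 _ _ (hP.matched k hi)) (hP.edge _ hi) hpref.1 hne
        with he | he
      · exact hh k (by omega) he.symm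
      · exact hh _ hi he.symm
  · rw [switch_apply_of_forall_ne fun i hi he => hon ⟨i, hi, he⟩] at hpref
    exact hMef a b ⟨h, hb, hpref, hrank⟩

end IsAugmentingPath

structure IsAlternatingPath (M Ms : R → Option H) (n : ℕ) (rs : ℕ → R) (hs : ℕ → H) :
    Prop where
  start : M (rs 0) = none
  aligned : ∀ i ≤ n, Ms (rs i) = some (hs i)
  matched : ∀ i < n, M (rs (i + 1)) = some (hs i)

namespace IsAlternatingPath

variable {n' : ℕ} {rs' : ℕ → R} {hs' : ℕ → H}

lemma eq_of_apply_eq (hMs : MatchInjective Ms) (p : IsAlternatingPath M Ms n rs hs)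
    (p' : IsAlternatingPath M Ms n' rs' hs') :
    ∀ {a b : ℕ}, a ≤ n → b ≤ n' → rs a = rs' b → a = b ∧ rs 0 = rs' 0
  | 0, 0, _, _, he => ⟨rfl, he⟩
  | 0, b + 1, _, hb, he => by
    have hM := p'.matched b hb
    rw [← he, p.start] at hM
    cases hM
  | a + 1, 0, ha, _, he => by
    have hM := p.matched a ha
    rw [he, p'.start] at hM
    cases hM
  | a + 1, b + 1, ha, hb, he => by
    have hab : hs a = hs' b := by
      have hM := p.matched a ha
      rwa [he, p'.matched b hb, Option.some_inj, eq_comm] at hM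
    obtain ⟨rfl, h0⟩ := eq_of_apply_eq hMs p p' (by omega) (by omega)
      (hMs (p.aligned a (by omega)) (hab ▸ p'.aligned b (by omega)))
    exact ⟨rfl, h0⟩

lemma injOn_rs (hMs : MatchInjective Ms) (p : IsAlternatingPath M Ms n rs hs) :
    Set.InjOn rs (Set.Iic n) :=
  fun _ ha _ hb he => (p.eq_of_apply_eq hMs p ha hb he).1

lemma injOn_hs (hMs : MatchInjective Ms) (p : IsAlternatingPath M Ms n rs hs) :
    Set.InjOn hs (Set.Iic n) :=
  fun _ ha _ hb he => p.injOn_rs hMs ha hb (hMs (p.aligned _ ha) (he ▸ p.aligned _ hb))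

lemma lt_card [Finite R] (hMs : MatchInjective Ms) (p : IsAlternatingPath M Ms n rs hs) :
    n < Nat.card R := by
  have := Nat.card_le_card_of_injective (fun i : Fin (n + 1) => rs i) fun a b he =>
    Fin.ext (p.injOn_rs hMs (Nat.lt_succ_iff.1 a.2) (Nat.lt_succ_iff.1 b.2) he)
  simpa using this

lemma snoc (p : IsAlternatingPath M Ms n rs hs) {e : R} {h : H} (he : M e = some (hs n))
    (he' : Ms e = some h) :
    IsAlternatingPath M Ms (n + 1) (Function.update rs (n + 1) e)
      (Function.update hs (n + 1) h) := by
  refine ⟨by simpa using p.start, fun i hi => ?_, fun i hi => ?_⟩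
  · rcases hi.lt_or_eq with hi | rfl
    · simpa [hi.ne] using p.aligned i (by omega)
    · simpa using he'
  · rcases (Nat.lt_succ_iff.1 hi).lt_or_eq with hi | rfl
    · simpa [hi.ne, (hi.trans (Nat.lt_succ_self n)).ne] using p.matched i hi
    · simpa using he

/-- Take a longest alternating path from `a`: it cannot be extended by `snoc`. -/
lemma exists_maximal [Finite R] (hMs : MatchInjective Ms) {a : R} {h : H} (ha : M a = none)
    (ha' : Ms a = some h) : ∃ n rs hs, IsAlternatingPath M Ms n rs hs ∧ rs 0 = a ∧
      ∀ e, M e = some (hs n) → Ms e = none := by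
  classical
  let Reaches : ℕ → Prop := fun n => ∃ rs hs, IsAlternatingPath M Ms n rs hs ∧ rs 0 = a
  have h0 : Reaches 0 :=
    ⟨fun _ => a, fun _ => h, ⟨ha, fun _ _ => ha', fun _ h => absurd h (Nat.not_lt_zero _)⟩, rfl⟩
  obtain ⟨rs, hs, p, hrs⟩ := Nat.findGreatest_spec (Nat.zero_le (Nat.card R)) h0
  refine ⟨_, rs, hs, p, hrs, fun e he => ?_⟩
  by_contra hne
  obtain ⟨h', he'⟩ := Option.ne_none_iff_exists'.1 hne
  have p' := p.snoc he he'
  have := Nat.le_findGreatest (p'.lt_card hMs).le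
    (show Reaches (_ + 1) from ⟨_, _, p', by simpa using hrs⟩)
  omega

end IsAlternatingPath

/-- Otherwise a longest alternating path from each `Ms`-matched, `M`-unmatched resident gets stuck
at an `M`-matched, `Ms`-unmatched one; since a path is determined by any of its residents, this
map is injective, so `Ms` would be no larger than `M`. -/
theorem exists_isAlternatingPath_of_msize_lt [Finite R] (hMs : MatchInjective Ms)
    (hsize : msize M < msize Ms) :
    ∃ n rs hs, IsAlternatingPath M Ms n rs hs ∧ ∀ r, M r ≠ some (hs n) := by
  by_contra! hno
  set X := {r | Ms r ≠ none}
  set Y := {r | M r ≠ none}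
  have hstuck : ∀ a ∈ X \ Y, ∃ e ∈ Y \ X, ∃ n rs hs,
      IsAlternatingPath M Ms n rs hs ∧ rs 0 = a ∧ M e = some (hs n) := by
    rintro a ⟨ha', ha⟩
    obtain ⟨h, hh⟩ := Option.ne_none_iff_exists'.1 ha'
    obtain ⟨n, rs, hs, p, rfl, hmax⟩ := IsAlternatingPath.exists_maximal hMs (not_not.1 ha) hh
    obtain ⟨e, he⟩ := hno n rs hs p
    exact ⟨e, ⟨by simp [Y, he], by simp [X, hmax e he]⟩, n, rs, hs, p, rfl, he⟩
  choose! f hfB hf using hstuck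
  have hinj : Set.InjOn f (X \ Y) := by
    intro a ha b hb hab
    obtain ⟨n, rs, hs, p, rfl, hn⟩ := hf a ha
    obtain ⟨n', rs', hs', p', rfl, hn'⟩ := hf b hb
    rw [hab, hn', Option.some_inj] at hn
    exact (p.eq_of_apply_eq hMs p' le_rfl le_rfl
      (hMs (p.aligned n le_rfl) (hn ▸ p'.aligned n' le_rfl))).2
  have hlt : (Y \ X).ncard < (X \ Y).ncard := by
    rw [← Set.ncard_lt_ncard_iff_ncard_sdiff_lt_ncard_sdiff]
    exact hsize
  have := Set.ncard_le_ncard_of_injOn f hfB hinj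
  omega

/-- `r, hs j` can replace the initial segment of the path up to `hs j`. -/
def CanReroute (I : HRLQ R H) (M : R → Option H) (n : ℕ) (rs : ℕ → R) (hs : ℕ → H) (j : ℕ)
    (r : R) : Prop :=
  j ≤ n ∧ M r = none ∧ I.E r (hs j) ∧ I.hPref (hs j) r ≤ I.hPref (hs j) (rs j)

lemma exists_optimal_reroute [Finite R] (h0 : CanReroute I M n rs hs 0 (rs 0)) :
    ∃ j r, CanReroute I M n rs hs j r ∧ ∀ k a, CanReroute I M n rs hs k a →
      k ≤ j ∧ (k = j → I.hPref (hs j) r ≤ I.hPref (hs j) a) := by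
  have hfin : {x : ℕ × R | CanReroute I M n rs hs x.1 x.2}.Finite :=
    ((Set.finite_Iic n).prod Set.finite_univ).subset fun x hx => ⟨hx.1, trivial⟩
  obtain ⟨⟨j, r⟩, hjr, hmin⟩ := Set.exists_min_image _
    (fun x => toLex (n - x.1, I.hPref (hs x.1) x.2)) hfin ⟨(0, rs 0), h0⟩
  refine ⟨j, r, hjr, fun k a hka => ?_⟩
  have hj := hjr.1
  have hk := hka.1
  rcases Prod.Lex.toLex_le_toLex.1 (hmin (k, a) hka) with hlt | ⟨heq, hle⟩
  · exact ⟨by dsimp only at hlt; omega, fun hkj => by dsimp only at hlt; omega⟩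
  · exact ⟨by dsimp only at heq; omega, fun hkj => by simpa [hkj] using hle⟩

namespace IsAlternatingPath

lemma isAugmentingPath_reroute [Finite R] (p : IsAlternatingPath M Ms n rs hs)
    (hMs : I.IsMatching Ms) (hMsinj : MatchInjective Ms) (hfree : ∀ r, M r ≠ some (hs n))
    {j : ℕ} {r : R} (hjr : CanReroute I M n rs hs j r) :
    I.IsAugmentingPath M (n - j) (Function.update (fun i => rs (j + i)) 0 r)
      (fun i => hs (j + i)) := by
  obtain ⟨hj, hr, hrj, -⟩ := hjr
  have hne : ∀ i, i + 1 ≤ n - j → rs (j + (i + 1)) ≠ r := fun i hi he => by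
    have hM := p.matched (j + i) (by omega)
    rw [add_assoc, he, hr] at hM
    cases hM
  refine ⟨by simpa using hr, fun i hi => ?_, fun i hi => ?_, ?_, ?_, ?_, ?_⟩
  · cases i with
    | zero => simpa using hrj
    | succ i => simpa using hMs.1 _ _ (p.aligned (j + (i + 1)) (by omega))
  · simpa [← add_assoc] using p.matched (j + i) (by omega)
  · simpa [Nat.add_sub_cancel' hj] using hfree
  · simpa [Nat.add_sub_cancel' hj] using hMs.one_le_uq (p.aligned n le_rfl)
  · rintro (_ | a) ha (_ | b) hb he
    · rfl
    · exact absurd he.symm (by simpa using hne b hb)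
    · exact absurd he (by simpa using hne a ha)
    · have := p.injOn_rs hMsinj (show j + (a + 1) ≤ n by rw [Set.mem_Iic] at ha; omega)
        (show j + (b + 1) ≤ n by rw [Set.mem_Iic] at hb; omega) (by simpa using he)
      omega
  · intro a ha b hb he
    have := p.injOn_hs hMsinj (show j + a ≤ n by rw [Set.mem_Iic] at ha; omega)
      (show j + b ≤ n by rw [Set.mem_Iic] at hb; omega) he
    omega

/-- An envied resident lies on the rerouted path, and its hospital prefers the envious resident
to its `Ms`-partner too; by envy-freeness of `Ms` and the list bound the envious resident is
unmatched, so it gives a better rerouting. -/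
lemma envyFree_switch_reroute [Finite R] [Finite H] (p : IsAlternatingPath M Ms n rs hs)
    (hstrict : I.StrictPrefs) (hlen : ∀ r, {h | I.E r h}.ncard ≤ 2) (hM : I.IsMatching M)
    (hMinj : MatchInjective M) (hMef : I.EnvyFree M) (hMs : I.IsMatching Ms)
    (hMsinj : MatchInjective Ms) (hMsef : I.EnvyFree Ms) (hfree : ∀ r, M r ≠ some (hs n))
    {j : ℕ} {r : R} (hjr : CanReroute I M n rs hs j r)
    (hopt : ∀ k a, CanReroute I M n rs hs k a →
      k ≤ j ∧ (k = j → I.hPref (hs j) r ≤ I.hPref (hs j) a)) :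
    I.EnvyFree (switch M (n - j) (Function.update (fun i => rs (j + i)) 0 r)
      (fun i => hs (j + i))) := by
  have hQ := p.isAugmentingPath_reroute hMs hMsinj hfree hjr
  set rs' := Function.update (fun i => rs (j + i)) 0 r with hrs'
  have hj := hjr.1
  intro a b hab
  obtain ⟨i, hi, rfl⟩ := hQ.exists_eq_of_envies_switch hlen hM hMinj hMef hab
  obtain ⟨h, hb, hpref, hrank⟩ := hab
  rw [hQ.switch_apply hi, Option.some_inj] at hb
  subst hb
  have hle : I.hPref (hs (j + i)) (rs' i) ≤ I.hPref (hs (j + i)) (rs (j + i)) := by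
    cases i with
    | zero => simpa [hrs'] using hjr.2.2.2
    | succ i => simp [hrs']
  obtain ⟨h', hMsa, hh'⟩ := hMsef.exists_preferred hstrict hMsinj
    (p.aligned (j + i) (by omega)) (hrank.trans_le hle) hpref.1
  have ha : switch M (n - j) rs' (fun i => hs (j + i)) a = none := by
    cases hsa : switch M (n - j) rs' (fun i => hs (j + i)) a with
    | none => rfl
    | some h₂ =>
      have hlt := hpref.2 h₂ hsa
      rcases acceptable_eq_or_eq hlen (hMs.1 _ _ hMsa) hpref.1
        ((hQ.isMatching_switch hM hMinj).1 _ _ hsa) (by rintro rfl; omega) with rfl | rfl <;>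
        omega
  obtain ⟨hij, hbetter⟩ := hopt (j + i) a
    ⟨by omega, eq_none_of_switch_eq_none ha, hpref.1, (hrank.trans_le hle).le⟩
  obtain rfl : i = 0 := by omega
  have := hbetter rfl
  simp only [hrs', add_zero, Function.update_self] at hrank
  omega

end IsAlternatingPath

theorem exists_isAugmentingPath_envyFree_switch [Finite R] [Finite H] (hstrict : I.StrictPrefs)
    (hlen : ∀ r, {h | I.E r h}.ncard ≤ 2) (hM : I.IsMatching M) (hMinj : MatchInjective M)
    (hMef : I.EnvyFree M) (hMs : I.IsMatching Ms) (hMsinj : MatchInjective Ms)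
    (hMsef : I.EnvyFree Ms) (hsize : msize M < msize Ms) :
    ∃ n rs hs, I.IsAugmentingPath M n rs hs ∧ I.EnvyFree (switch M n rs hs) := by
  obtain ⟨n, rs, hs, p, hfree⟩ := exists_isAlternatingPath_of_msize_lt hMsinj hsize
  obtain ⟨j, r, hjr, hopt⟩ := exists_optimal_reroute
    ⟨Nat.zero_le n, p.start, hMs.1 _ _ (p.aligned 0 (Nat.zero_le n)), le_rfl⟩
  exact ⟨_, _, _, p.isAugmentingPath_reroute hMs hMsinj hfree hjr,
    p.envyFree_switch_reroute hstrict hlen hM hMinj hMef hMs hMsinj hMsef hfree hjr hopt⟩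

end HRLQ

/-- In an HRLQ instance with resident lists of length at most 2 and all quotas at
most 1, if M and M* are feasible envy-free matchings with |M*| > |M|, then there
is an augmenting path P w.r.t. M (from an unmatched resident to an
under-subscribed hospital) whose switch M ⊕ P is again a feasible envy-free
matching. -/
theorem exists_envy_free_augmenting_path
    {R H : Type} [Fintype R] [Fintype H] (I : HRLQ R H)
    (hstrict : I.StrictPrefs)
    (hlen : ∀ r, {h | I.E r h}.ncard ≤ 2)
    (hq : ∀ h, I.lq h ≤ 1 ∧ I.uq h ≤ 1)
    (M Mstar : R → Option H)
    (hM : I.IsMatching M ∧ I.Feasible M ∧ I.EnvyFree M)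
    (hMstar : I.IsMatching Mstar ∧ I.Feasible Mstar ∧ I.EnvyFree Mstar)
    (hsize : HRLQ.msize M < HRLQ.msize Mstar) :
    ∃ (n : ℕ) (rs : Fin (n + 1) → R) (hs : Fin (n + 1) → H),
      Function.Injective rs ∧ Function.Injective hs ∧
      -- P starts at a resident unmatched in M
      M (rs 0) = none ∧
      -- the non-M edges of P are edges of the instance
      (∀ i, I.E (rs i) (hs i)) ∧
      -- the M-edges of P
      (∀ i : Fin n, M (rs i.succ) = some (hs i.castSucc)) ∧
      -- P ends at a hospital under-subscribed in M
      (HRLQ.matchedTo M (hs (Fin.last n))).ncard < I.uq (hs (Fin.last n)) ∧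
      -- M ⊕ P is a feasible envy-free matching
      (∃ M', (∀ i, M' (rs i) = some (hs i)) ∧
        (∀ r, (∀ i, r ≠ rs i) → M' r = M r) ∧
        I.IsMatching M' ∧ I.Feasible M' ∧ I.EnvyFree M') := by
  obtain ⟨hM, hMf, hMef⟩ := hM
  obtain ⟨hMs, -, hMsef⟩ := hMstar
  have hMinj := hM.matchInjective fun h => (hq h).2
  have hMsinj := hMs.matchInjective fun h => (hq h).2
  obtain ⟨n, rs, hs, hP, hef⟩ := HRLQ.exists_isAugmentingPath_envyFree_switch hstrict hlen hM
    hMinj hMef hMs hMsinj hMsef hsize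
  have hle : ∀ i : Fin (n + 1), (i : ℕ) ≤ n := fun i => Nat.lt_succ_iff.1 i.2
  refine ⟨n, fun i => rs i, fun i => hs i, fun a b he => Fin.ext (hP.injOn_rs (hle a) (hle b) he),
    fun a b he => Fin.ext (hP.injOn_hs (hle a) (hle b) he), hP.start, fun i => hP.edge i (hle i),
    fun i => hP.matched i i.2, by simpa using hP.ncard_matchedTo_last_lt, _,
    fun i => hP.switch_apply (hle i),
    fun r hr => HRLQ.switch_apply_of_forall_ne fun i hi he => hr ⟨i, Nat.lt_succ_of_le hi⟩ he.symm,
    hP.isMatching_switch hM hMinj, hP.feasible_switch hMinj hMf fun h => (hq h).1, hef⟩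
end

section
/- For every feasible HRLQ instance there exists a feasible relaxed stable matching whose size is at least the size of a stable matching of the instance (where the stable matching is computed ignoring lower quotas). -/
/-! Start from the stable matching and repair deficient hospitals one at a time. A deficient
hospital `h` receives a resident `r` that a fixed feasible matching assigns to `h`, and `r` is
forced to `h` by moving `h` to the top of `r`'s list. In the promoted instance the new matching
is quasi-stable (every blocking pair comes from a vacancy), and a sequence of proposals, each
admitting the admirer a hospital likes best, makes it stable again without unmatching anybody.
At most `lq h` residents are ever forced to `h`, and a resident blocking a stable matching of
the promoted instance in the original one must be a forced resident sitting at its forced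
hospital; so once no hospital is deficient the matching is feasible and relaxed stable. -/

namespace HRLQ

open Function

variable {R H : Type} {I : HRLQ R H} {M A Mf : R → Option H} {r a : R} {h h' h₀ : H}
  {o : Option H}

lemma not_prefersH_self (I : HRLQ R H) (r : R) (h : H) : ¬ I.PrefersH r h (some h) :=
  fun hp => lt_irrefl _ (hp.2 h rfl)

lemma PrefersH.trans (h₁ : I.PrefersH r h (some h')) (h₂ : I.PrefersH r h' o) :
    I.PrefersH r h o :=
  ⟨h₁.1, fun _ ho => (h₁.2 h' rfl).trans (h₂.2 _ ho)⟩

lemma blocks_of_prefersH (hp : I.PrefersH r h (M r))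
    (hroom : (matchedTo M h).ncard < I.uq h ∨
      ∃ r' ∈ matchedTo M h, I.hPref h r < I.hPref h r') :
    I.Blocks M r h :=
  ⟨hp.1, fun e => I.not_prefersH_self r h (e ▸ hp), hp, hroom⟩

lemma Stable.uq_le_of_prefersH (hst : I.Stable M) (hp : I.PrefersH r h (M r)) :
    I.uq h ≤ (matchedTo M h).ncard :=
  not_lt.1 fun hlt => hst r h (blocks_of_prefersH hp (Or.inl hlt))

variable (I) in
/-- Stability with respect to the residents already employed: every blocking pair is due to a
vacancy. -/
def Quasistable (M : R → Option H) : Prop :=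
  ∀ r h, I.PrefersH r h (M r) → ∀ r' ∈ matchedTo M h, I.hPref h r' ≤ I.hPref h r

lemma Stable.quasistable (hst : I.Stable M) : I.Quasistable M :=
  fun r h hp r' hr' => not_lt.1 fun hlt => hst r h (blocks_of_prefersH hp (Or.inr ⟨r', hr', hlt⟩))

lemma Quasistable.ncard_lt_uq (hq : I.Quasistable M) (hb : I.Blocks M r h) :
    (matchedTo M h).ncard < I.uq h :=
  hb.2.2.2.resolve_right fun ⟨r', hr', hlt⟩ => (hq r h hb.2.2.1 r' hr').not_gt hlt

open Classical in
variable (I) in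
/-- Residents `r` with `A r = some h₀` rank `h₀` first; the other preferences are unchanged. -/
noncomputable def promote (A : R → Option H) : HRLQ R H :=
  { I with
    rPref := fun r h => (A r).elim (I.rPref r h) fun h₀ => if h = h₀ then 0 else I.rPref r h + 1 }

lemma promote_none (I : HRLQ R H) : I.promote (fun _ => none) = I := rfl

lemma isMatching_promote : (I.promote A).IsMatching M ↔ I.IsMatching M := Iff.rfl

lemma prefersH_promote (hA : ∀ h', o = some h' → A r ≠ some h') (hp : I.PrefersH r h o) :
    (I.promote A).PrefersH r h o := by
  refine ⟨hp.1, fun h' ho => ?_⟩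
  have hlt := hp.2 h' ho
  cases hAr : A r with
  | none => simpa [promote, hAr] using hlt
  | some h₀ =>
    have hne : h' ≠ h₀ := fun e => hA h' ho (e ▸ hAr)
    simp only [promote, hAr, Option.elim_some, if_neg hne]
    split_ifs <;> omega

lemma prefersH_promote_forced (hA : A r = some h₀) (hE : I.E r h₀) (ho : o ≠ some h₀) :
    (I.promote A).PrefersH r h₀ o := by
  refine ⟨hE, fun h' ho' => ?_⟩
  have hne : h' ≠ h₀ := fun e => ho (e ▸ ho')
  simp [promote, hA, hne]

lemma not_prefersH_promote_forced (hA : A r = some h₀) :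
    ¬ (I.promote A).PrefersH r h (some h₀) := fun hp => by
  simpa [promote, hA] using hp.2 h₀ rfl

lemma Stable.exists_forced_of_blocks_promote (hst : (I.promote A).Stable M)
    (hb : I.Blocks M r h) : ∃ h₀, A r = some h₀ ∧ M r = some h₀ := by
  by_contra hne
  push Not at hne
  exact hst r h ⟨hb.1, hb.2.1, prefersH_promote (fun h' ho hA => hne h' hA ho) hb.2.2.1, hb.2.2.2⟩

theorem relaxedStable_of_stable_promote [Finite R] (hA : ∀ h, (matchedTo A h).ncard ≤ I.lq h)
    (hst : (I.promote A).Stable M) : I.RelaxedStable M := by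
  refine ⟨fun h => (Set.ncard_le_ncard ?_).trans (hA h), fun r hr h hb => ?_⟩
  · rintro r ⟨hrh, h', hb⟩
    obtain ⟨h₀, hAr, hMr⟩ := hst.exists_forced_of_blocks_promote hb
    rw [show M r = some h from hrh, Option.some_inj] at hMr
    exact hMr ▸ hAr
  · obtain ⟨h₀, -, hMr⟩ := hst.exists_forced_of_blocks_promote hb
    simp [hr] at hMr

lemma Stable.matchedTo_subset_of_promote (hst : (I.promote A).Stable M)
    (hroom : (matchedTo M h).ncard < I.uq h) (hE : ∀ r ∈ matchedTo A h, I.E r h) :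
    matchedTo A h ⊆ matchedTo M h := fun r hr => by
  by_contra hne
  exact hst r h (blocks_of_prefersH (prefersH_promote_forced hr (hE r hr) hne) (Or.inl hroom))

variable (I) in
def IsForcing (Mf A : R → Option H) : Prop :=
  ∀ h, matchedTo A h ⊆ matchedTo Mf h ∧ (matchedTo A h).ncard ≤ I.lq h

lemma IsForcing.exists_unforced [Finite R] (hA : I.IsForcing Mf A)
    (hlt : (matchedTo A h).ncard < (matchedTo Mf h).ncard) : ∃ r, Mf r = some h ∧ A r = none := by
  obtain ⟨r, hrMf, hrA⟩ := Set.exists_of_ssubset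
    ((hA h).1.ssubset_of_ne fun e => (e ▸ hlt).false)
  refine ⟨r, hrMf, ?_⟩
  cases hAr : A r with
  | none => rfl
  | some h' =>
    have hMf : Mf r = some h' := (hA h').1 hAr
    rw [show Mf r = some h from hrMf, Option.some_inj] at hMf
    exact absurd (hMf ▸ hAr) hrA

section Update

variable [DecidableEq R]

lemma matchedTo_update_subset_insert (M : R → Option H) (a : R) (h₀ h : H) :
    matchedTo (update M a (some h₀)) h ⊆ insert a (matchedTo M h) := by
  intro r hr
  by_cases hra : r = a
  · exact hra ▸ Set.mem_insert r _
  · exact Set.mem_insert_of_mem _ (by simpa [matchedTo, update_of_ne hra] using hr)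

lemma matchedTo_update_subset (M : R → Option H) (a : R) (hne : h ≠ h₀) :
    matchedTo (update M a (some h₀)) h ⊆ matchedTo M h := by
  intro r hr
  by_cases hra : r = a
  · subst hra
    simp only [matchedTo, Set.mem_ofPred_eq, update_self, Option.some_inj] at hr
    exact absurd hr.symm hne
  · simpa [matchedTo, update_of_ne hra] using hr

lemma ncard_matchedTo_update_le [Finite R] {c : H → ℕ} (a : R)
    (hM : ∀ h, (matchedTo M h).ncard ≤ c h) (hlt : (matchedTo M h₀).ncard < c h₀) (h : H) :
    (matchedTo (update M a (some h₀)) h).ncard ≤ c h := by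
  by_cases hh : h = h₀
  · subst hh
    calc (matchedTo (update M a (some h)) h).ncard
        ≤ (insert a (matchedTo M h)).ncard :=
          Set.ncard_le_ncard (matchedTo_update_subset_insert M a h h)
      _ ≤ (matchedTo M h).ncard + 1 := Set.ncard_insert_le _ _
      _ ≤ c h := hlt
  · exact (Set.ncard_le_ncard (matchedTo_update_subset M a hh)).trans (hM h)

lemma msize_le_msize_update [Finite R] (M : R → Option H) (a : R) (h : H) :
    msize M ≤ msize (update M a (some h)) := by
  refine Set.ncard_le_ncard fun r hr => ?_
  by_cases hra : r = a
  · simp [hra]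
  · simpa [update_of_ne hra] using hr

lemma setOf_update_eq_none_ssubset (ha : A a = none) (h : H) :
    {r | update A a (some h) r = none} ⊂ {r | A r = none} := by
  refine (Set.ssubset_iff_of_subset fun r hr => ?_).2 ⟨a, ha, by simp⟩
  by_cases hra : r = a
  · simp_all
  · simpa [update_of_ne hra] using hr

lemma IsMatching.update [Finite R] (hM : I.IsMatching M) (hE : I.E a h)
    (hlt : (matchedTo M h).ncard < I.uq h) : I.IsMatching (update M a (some h)) := by
  refine ⟨fun r h' hr => ?_, ncard_matchedTo_update_le a hM.2 hlt⟩
  by_cases hra : r = a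
  · subst hra
    simp only [update_self, Option.some_inj] at hr
    exact hr ▸ hE
  · exact hM.1 r h' (by simpa [update_of_ne hra] using hr)

lemma quasistable_update
    (hold : ∀ r h', I.PrefersH r h' (update M a (some h) r) →
      ∀ r' ∈ matchedTo M h', I.hPref h' r' ≤ I.hPref h' r)
    (htop : ∀ r ≠ a, I.PrefersH r h (M r) → I.hPref h a ≤ I.hPref h r) :
    I.Quasistable (update M a (some h)) := by
  intro r h' hp r' hr'
  by_cases hr'a : r' = a
  · subst hr'a
    obtain rfl : h = h' := by simpa [matchedTo] using hr'
    by_cases hra : r = r'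
    · subst hra
      exact absurd (by simpa using hp) (I.not_prefersH_self r h)
    · exact htop r hra (by simpa [update_of_ne hra] using hp)
  · exact hold r h' hp r' (by simpa [matchedTo, update_of_ne hr'a] using hr')

variable (I) in
def improvingPairs (M : R → Option H) : Set (R × H) := {p | I.PrefersH p.1 p.2 (M p.1)}

lemma improvingPairs_update_ssubset (hp : I.PrefersH a h (M a)) :
    I.improvingPairs (update M a (some h)) ⊂ I.improvingPairs M := by
  refine (Set.ssubset_iff_of_subset ?_).2 ⟨(a, h), hp, by simp [improvingPairs, not_prefersH_self]⟩
  rintro ⟨r, h'⟩ hr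
  by_cases hra : r = a
  · subst hra
    exact PrefersH.trans (by simpa [improvingPairs] using hr) hp
  · simpa [improvingPairs, update_of_ne hra] using hr

lemma Quasistable.exists_proposal [Finite R] (hM : I.IsMatching M) (hq : I.Quasistable M)
    (hst : ¬ I.Stable M) :
    ∃ M', I.IsMatching M' ∧ I.Quasistable M' ∧ I.improvingPairs M' ⊂ I.improvingPairs M ∧
      msize M ≤ msize M' := by
  obtain ⟨r₀, h, hb⟩ : ∃ r h, I.Blocks M r h := by simpa [Stable] using hst
  obtain ⟨a, ha, hmin⟩ := Set.exists_min_image {r | I.PrefersH r h (M r)} (I.hPref h)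
    (Set.toFinite _) ⟨r₀, hb.2.2.1⟩
  refine ⟨update M a (some h), hM.update ha.1 (hq.ncard_lt_uq hb),
    quasistable_update (fun r h' hp r' hr' => ?_) (fun r _ hp => hmin r hp),
    improvingPairs_update_ssubset ha, msize_le_msize_update M a h⟩
  by_cases hra : r = a
  · subst hra
    exact hq r h' ((by simpa using hp : I.PrefersH r h' (some h)).trans ha) r' hr'
  · exact hq r h' (by simpa [update_of_ne hra] using hp) r' hr'

theorem Quasistable.exists_stable [Finite R] [Finite H] (hM : I.IsMatching M)
    (hq : I.Quasistable M) : ∃ M', I.IsMatching M' ∧ I.Stable M' ∧ msize M ≤ msize M' := by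
  induction hn : (I.improvingPairs M).ncard using Nat.strong_induction_on generalizing M with
  | _ n ih =>
  by_cases hst : I.Stable M
  · exact ⟨M, hM, hst, le_rfl⟩
  obtain ⟨M', hM', hq', hlt, hsize⟩ := hq.exists_proposal hM hst
  obtain ⟨M'', hM'', hst'', hsize'⟩ := ih _ (hn ▸ Set.ncard_lt_ncard hlt) hM' hq' rfl
  exact ⟨M'', hM'', hst'', hsize.trans hsize'⟩

lemma prefersH_promote_update_iff {x : Option H} (hra : r ≠ a) :
    (I.promote (update A a x)).PrefersH r h o ↔ (I.promote A).PrefersH r h o := by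
  simp only [PrefersH, promote, update_of_ne hra]

lemma Stable.quasistable_promote_update (hst : (I.promote A).Stable M)
    (hroom : (matchedTo M h).ncard < I.uq h) :
    (I.promote (update A a (some h))).Quasistable (update M a (some h)) := by
  refine quasistable_update (fun r h' hp r' hr' => ?_) (fun r hra hp => ?_)
  · by_cases hra : r = a
    · subst hra
      exact absurd (by simpa using hp) (not_prefersH_promote_forced (update_self r (some h) A))
    · rw [update_of_ne hra, prefersH_promote_update_iff hra] at hp
      exact hst.quasistable r h' hp r' hr'
  · rw [prefersH_promote_update_iff hra] at hp
    exact absurd (hst.uq_le_of_prefersH hp) (not_le.2 hroom)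

lemma IsForcing.force [Finite R] (hA : I.IsForcing Mf A) (hMf : Mf a = some h)
    (hlt : (matchedTo A h).ncard < I.lq h) : I.IsForcing Mf (update A a (some h)) := by
  refine fun h' => ⟨fun r hr => ?_, ncard_matchedTo_update_le a (fun h => (hA h).2) hlt h'⟩
  by_cases hra : r = a
  · subst hra
    obtain rfl : h = h' := by simpa [matchedTo] using hr
    exact hMf
  · exact (hA h').1 (by simpa [matchedTo, update_of_ne hra] using hr)

variable [Finite R] [Finite H]

lemma IsForcing.exists_step (hMf : I.IsMatching Mf) (hMfF : I.Feasible Mf)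
    (hA : I.IsForcing Mf A) (hM : I.IsMatching M) (hst : (I.promote A).Stable M)
    (hdef : (matchedTo M h).ncard < I.lq h) :
    ∃ a, A a = none ∧ ∃ M', I.IsForcing Mf (update A a (some h)) ∧ I.IsMatching M' ∧
      (I.promote (update A a (some h))).Stable M' ∧ msize M ≤ msize M' := by
  have hroom : (matchedTo M h).ncard < I.uq h := hdef.trans_le ((hMfF h).trans (hMf.2 h))
  have hforced : matchedTo A h ⊆ matchedTo M h :=
    hst.matchedTo_subset_of_promote hroom fun r hr => hMf.1 r h ((hA h).1 hr)
  have hAlt : (matchedTo A h).ncard < I.lq h := (Set.ncard_le_ncard hforced).trans_lt hdef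
  obtain ⟨a, hMfa, hAa⟩ := hA.exists_unforced (hAlt.trans_le (hMfF h))
  have hMa : (I.promote (update A a (some h))).IsMatching (update M a (some h)) :=
    isMatching_promote.2 (hM.update (hMf.1 a h hMfa) hroom)
  obtain ⟨M', hM', hst', hsize⟩ := (hst.quasistable_promote_update hroom).exists_stable hMa
  exact ⟨a, hAa, M', hA.force hMfa hAlt, hM', hst', (msize_le_msize_update M a h).trans hsize⟩

theorem IsForcing.exists_feasible (hMf : I.IsMatching Mf) (hMfF : I.Feasible Mf)
    (hA : I.IsForcing Mf A) (hM : I.IsMatching M) (hst : (I.promote A).Stable M) :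
    ∃ A' M', I.IsForcing Mf A' ∧ I.IsMatching M' ∧ I.Feasible M' ∧
      (I.promote A').Stable M' ∧ msize M ≤ msize M' := by
  induction hn : {r | A r = none}.ncard using Nat.strong_induction_on generalizing A M with
  | _ n ih =>
  by_cases hfeas : I.Feasible M
  · exact ⟨A, M, hA, hM, hfeas, hst, le_rfl⟩
  obtain ⟨h, hdef⟩ : ∃ h, (matchedTo M h).ncard < I.lq h := by simpa [Feasible] using hfeas
  obtain ⟨a, hAa, M', hA', hM', hst', hsize⟩ := hA.exists_step hMf hMfF hM hst hdef
  obtain ⟨A'', M'', hA'', hM'', hfeas'', hst'', hsize'⟩ :=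
    ih _ (hn ▸ Set.ncard_lt_ncard (setOf_update_eq_none_ssubset hAa h)) hA' hM' hst' rfl
  exact ⟨A'', M'', hA'', hM'', hfeas'', hst'', hsize.trans hsize'⟩

end Update

end HRLQ

theorem relaxed_stable_at_least_stable_size_general
    {R H : Type} [Fintype R] [Fintype H] (I : HRLQ R H)
    (hfeas : ∃ M, I.IsMatching M ∧ I.Feasible M)
    (Ms : R → Option H) (hMs : I.IsMatching Ms) (hMsStable : I.Stable Ms) :
    ∃ M, I.IsMatching M ∧ I.Feasible M ∧ I.RelaxedStable M ∧
      HRLQ.msize Ms ≤ HRLQ.msize M := by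
  classical
  obtain ⟨Mf, hMf, hMfF⟩ := hfeas
  have hnone : I.IsForcing Mf fun _ => none := fun h => by simp [HRLQ.matchedTo]
  obtain ⟨A, M, hA, hM, hfeasM, hst, hsize⟩ :=
    hnone.exists_feasible hMf hMfF hMs (by rwa [HRLQ.promote_none])
  exact ⟨M, hM, hfeasM, HRLQ.relaxedStable_of_stable_promote (fun h => (hA h).2) hst, hsize⟩

/-- Every feasible HRLQ instance admits a feasible relaxed stable matching whose
size is at least the size of a stable matching of the instance (computed
ignoring lower quotas). -/
theorem relaxed_stable_at_least_stable_size
    {R H : Type} [Fintype R] [Fintype H] (I : HRLQ R H)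
    (hstrict : I.StrictPrefs)
    (hfeas : ∃ M, I.IsMatching M ∧ I.Feasible M)
    (Ms : R → Option H) (hMs : I.IsMatching Ms) (hMsStable : I.Stable Ms) :
    ∃ M, I.IsMatching M ∧ I.Feasible M ∧ I.RelaxedStable M ∧
      HRLQ.msize Ms ≤ HRLQ.msize M :=
  relaxed_stable_at_least_stable_size_general I hfeas Ms hMs hMsStable
end

section
/- In a graph G=(V,E), construct the HRLQ instance G' with, for each vertex v_i of degree d with neighbors v_{j1},…,v_{jd}: residents r1^i (list: h3^i, h2^{j1},…,h2^{jd}, h1^i), r2^i (list: h2^i, h3^i), r3^i (list: h2^i), and hospitals h1^i with quotas [0,1] (list: r1^i), h2^i with quotas [0,1] (list: r2^i, r1^{j1},…,r1^{jd}, r3^i), h3^i with quotas [1,1] (list: r2^i, r1^i), using a fixed global vertex ordering for neighbor lists. Then the maximum size of a feasible relaxed stable matching in G' equals 3|V| minus the size of a minimum vertex cover of G. -/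
/-!
A vertex cover `S` yields a relaxed stable matching that leaves exactly the residents `r3ᵛ`,
`v ∈ S`, unmatched: for `v ∈ S` put `r1ᵛ` at `h3ᵛ` and `r2ᵛ` at `h2ᵛ`, otherwise `r1ᵛ` at `h1ᵛ`,
`r2ᵛ` at `h3ᵛ` and `r3ᵛ` at `h2ᵛ`. Since `S` covers every edge, the only residents in blocking
pairs sit at the hospitals `h3ᵛ`, whose lower quota is `1`.

Conversely, in a relaxed stable matching residents at `h1` or `h2` hospitals and unmatched residents
block nothing, and the vertices whose `r3` is unmatched cover every edge `uw`. Otherwise `h2ʷ`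
holds `r3ʷ`, its last choice, so `r2ᵘ` is pushed to `h3ᵘ`, and `r1ᵘ`, which may not block `h2ʷ`,
must hold `h2ᶜ` for a neighbour `c < w`. This repeats with `(c, u)` in place of `(u, w)`, an infinite
descent in the finite order on `V`.
-/

theorem fin_three_cases (i : Fin 3) : i = 0 ∨ i = 1 ∨ i = 2 := by
  fin_cases i <;> simp

theorem card_prod_fin_three (V : Type) : Nat.card (V × Fin 3) = 3 * Nat.card V := by
  rw [Nat.card_prod, Nat.card_eq_fintype_card (α := Fin 3), Fintype.card_fin, mul_comm]

namespace HRLQ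

section General

variable {R H : Type} [Finite R] {I : HRLQ R H} {M : R → Option H} {r r' : R} {h h' : H}

theorem msize_add_ncard_unmatched (M : R → Option H) :
    msize M + {r | M r = none}.ncard = Nat.card R := by
  rw [add_comm]
  exact Set.ncard_add_ncard_compl _

theorem isMatching_of_injective (hE : ∀ r h, M r = some h → I.E r h)
    (hinj : ∀ r r' h, M r = some h → M r' = some h → r = r') (hu : ∀ h, 1 ≤ I.uq h) :
    I.IsMatching M :=
  ⟨hE, fun h => ((Set.ncard_le_one).mpr fun r hr r' hr' => hinj r r' h hr hr').trans (hu h)⟩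

theorem IsMatching.eq_of_eq_some (hM : I.IsMatching M) (hu : I.uq h ≤ 1)
    (hr : M r = some h) (hr' : M r' = some h) : r = r' :=
  (Set.ncard_le_one).mp ((hM.2 h).trans hu) r hr r' hr'

theorem IsMatching.ne_some_of_hPref_lt (hM : I.IsMatching M) (hu : I.uq h ≤ 1)
    (hr' : M r' = some h) (hlt : I.hPref h r < I.hPref h r') : M r ≠ some h := by
  intro hr
  rw [hM.eq_of_eq_some hu hr hr'] at hlt
  exact lt_irrefl _ hlt

theorem IsMatching.blocks_of_hPref_lt (hM : I.IsMatching M) (hu : I.uq h ≤ 1) (hE : I.E r h)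
    (hpref : ∀ h', M r = some h' → I.rPref r h < I.rPref r h')
    (hr' : M r' = some h) (hlt : I.hPref h r < I.hPref h r') : I.Blocks M r h :=
  ⟨hE, hM.ne_some_of_hPref_lt hu hr' hlt, ⟨hE, hpref⟩, Or.inr ⟨r', hr', hlt⟩⟩

theorem IsMatching.not_blocks_of_hPref_le (hM : I.IsMatching M) (hu : I.uq h ≤ 1)
    (hr' : M r' = some h) (hle : I.hPref h r' ≤ I.hPref h r) : ¬ I.Blocks M r h := by
  rintro ⟨-, -, -, hfree | ⟨r'', hr'', hlt⟩⟩
  · have : 0 < (matchedTo M h).ncard := (Set.ncard_pos).mpr ⟨r', hr'⟩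
    omega
  · rw [hM.eq_of_eq_some hu hr'' hr'] at hlt
    omega

theorem relaxedStable_of_blocks_matched
    (hblock : ∀ r h', I.Blocks M r h' → ∃ h, M r = some h ∧ I.uq h ≤ I.lq h)
    (hM : I.IsMatching M) : I.RelaxedStable M := by
  refine ⟨fun h => ?_, fun r hr h' hb => ?_⟩
  · rcases Set.eq_empty_or_nonempty {r | r ∈ matchedTo M h ∧ ∃ h', I.Blocks M r h'} with
      hempty | ⟨r, hr, h', hb⟩
    · simp [hempty]
    · obtain ⟨h₀, hr₀, hle⟩ := hblock r h' hb
      obtain rfl : h₀ = h := Option.some_injective _ (hr₀.symm.trans hr)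
      calc _ ≤ (matchedTo M h₀).ncard := Set.ncard_le_ncard fun _ hx => hx.1
        _ ≤ I.uq h₀ := hM.2 h₀
        _ ≤ I.lq h₀ := hle
  · obtain ⟨h, hr', -⟩ := hblock r h' hb
    simp [hr] at hr'

theorem RelaxedStable.not_blocks_of_lq_eq_zero (hRS : I.RelaxedStable M) (hr : M r = some h)
    (h0 : I.lq h = 0) : ¬ I.Blocks M r h' := fun hb => by
  have : 0 < {x | x ∈ matchedTo M h ∧ ∃ h', I.Blocks M x h'}.ncard :=
    (Set.ncard_pos).mpr ⟨r, hr, h', hb⟩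
  have := hRS.1 h
  omega

theorem RelaxedStable.ne_none_of_hPref_lt (hRS : I.RelaxedStable M) (hM : I.IsMatching M)
    (hu : I.uq h ≤ 1) (hE : I.E r h) (hr' : M r' = some h)
    (hlt : I.hPref h r < I.hPref h r') : M r ≠ none := fun hr =>
  hRS.2 r hr h (hM.blocks_of_hPref_lt hu hE (by simp [hr]) hr' hlt)

theorem RelaxedStable.exists_rPref_le_of_hPref_lt (hRS : I.RelaxedStable M)
    (hM : I.IsMatching M) (hu : I.uq h ≤ 1) (hE : I.E r h) (hr' : M r' = some h)
    (hlt : I.hPref h r < I.hPref h r') (hlq : ∀ h₀, M r = some h₀ → I.lq h₀ = 0) :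
    ∃ h₀, M r = some h₀ ∧ h₀ ≠ h ∧ I.rPref r h₀ ≤ I.rPref r h := by
  have hne := hM.ne_some_of_hPref_lt hu hr' hlt
  by_contra! hcon
  have hb := hM.blocks_of_hPref_lt hu hE
    (fun h₀ hr₀ => hcon h₀ hr₀ fun h₀h => hne (h₀h ▸ hr₀)) hr' hlt
  cases hr : M r with
  | none => exact hRS.2 r hr h hb
  | some h₀ => exact hRS.not_blocks_of_lq_eq_zero hr (hlq h₀ hr) hb

end General

/-- Resident `(v, i)` and hospital `(v, j)` stand for `r_{i+1}^v` and `h_{j+1}^v`. -/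
structure IsVertexCoverReduction {V : Type} [LinearOrder V] (G : SimpleGraph V)
    (I : HRLQ (V × Fin 3) (V × Fin 3)) : Prop where
  E_r1 : ∀ v u (j : Fin 3), I.E (v, 0) (u, j) ↔ (u = v ∧ (j = 2 ∨ j = 0)) ∨ (G.Adj v u ∧ j = 1)
  E_r2 : ∀ v u (j : Fin 3), I.E (v, 1) (u, j) ↔ u = v ∧ (j = 1 ∨ j = 2)
  E_r3 : ∀ v u (j : Fin 3), I.E (v, 2) (u, j) ↔ u = v ∧ j = 1
  r1_h3_lt_h2 : ∀ v u, G.Adj v u → I.rPref (v, 0) (v, 2) < I.rPref (v, 0) (u, 1)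
  r1_h2_lt_h2 : ∀ v u w, G.Adj v u → G.Adj v w → u < w →
    I.rPref (v, 0) (u, 1) < I.rPref (v, 0) (w, 1)
  r1_h2_lt_h1 : ∀ v u, G.Adj v u → I.rPref (v, 0) (u, 1) < I.rPref (v, 0) (v, 0)
  r1_h3_lt_h1 : ∀ v, I.rPref (v, 0) (v, 2) < I.rPref (v, 0) (v, 0)
  r2_h2_lt_h3 : ∀ v, I.rPref (v, 1) (v, 1) < I.rPref (v, 1) (v, 2)
  h2_r2_lt_r1 : ∀ v u, G.Adj v u → I.hPref (v, 1) (v, 1) < I.hPref (v, 1) (u, 0)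
  h2_r1_lt_r1 : ∀ v u w, G.Adj v u → G.Adj v w → u < w →
    I.hPref (v, 1) (u, 0) < I.hPref (v, 1) (w, 0)
  h2_r1_lt_r3 : ∀ v u, G.Adj v u → I.hPref (v, 1) (u, 0) < I.hPref (v, 1) (v, 2)
  h2_r2_lt_r3 : ∀ v, I.hPref (v, 1) (v, 1) < I.hPref (v, 1) (v, 2)
  h3_r2_lt_r1 : ∀ v, I.hPref (v, 2) (v, 1) < I.hPref (v, 2) (v, 0)
  lq_eq : ∀ v (j : Fin 3), I.lq (v, j) = if j = 2 then 1 else 0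
  uq_eq : ∀ v (j : Fin 3), I.uq (v, j) = 1

section CoverMatching

variable {V : Type} [DecidableEq V]

def coverMatching (S : Finset V) (r : V × Fin 3) : Option (V × Fin 3) :=
  if r.1 ∈ S then ![some (r.1, 2), some (r.1, 1), none] r.2
  else ![some (r.1, 0), some (r.1, 2), some (r.1, 1)] r.2

theorem coverMatching_injective {S : Finset V} {r r' h : V × Fin 3}
    (hr : coverMatching S r = some h) (hr' : coverMatching S r' = some h) : r = r' := by
  obtain ⟨v, i⟩ := r
  obtain ⟨v', i'⟩ := r'
  fin_cases i <;> fin_cases i' <;> by_cases hv : v ∈ S <;> by_cases hv' : v' ∈ S <;>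
    simp [coverMatching, hv, hv'] at hr hr' <;> subst hr <;> simp_all

theorem msize_coverMatching_add_card [Finite V] (S : Finset V) :
    msize (coverMatching S) + S.card = 3 * Nat.card V := by
  have hunmatched : {r | coverMatching S r = none} = (fun v => (v, 2)) '' ↑S := by
    ext ⟨v, i⟩
    rcases fin_three_cases i with rfl | rfl | rfl <;> by_cases hv : v ∈ S <;>
      simp [coverMatching, hv]
  have := msize_add_ncard_unmatched (coverMatching S)
  rwa [hunmatched, Set.ncard_image_of_injective _ (Prod.mk_left_injective 2),
    Set.ncard_coe_finset, card_prod_fin_three] at this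

end CoverMatching

namespace IsVertexCoverReduction

variable {V : Type} [LinearOrder V] {G : SimpleGraph V} {I : HRLQ (V × Fin 3) (V × Fin 3)}
  {M : V × Fin 3 → Option (V × Fin 3)} {r : V × Fin 3} {h : V × Fin 3} {v a b : V}

theorem uq_le_one (hI : IsVertexCoverReduction G I) (h : V × Fin 3) : I.uq h ≤ 1 :=
  (hI.uq_eq h.1 h.2).le

theorem lq_h1 (hI : IsVertexCoverReduction G I) (v : V) : I.lq (v, 0) = 0 := by
  simp [hI.lq_eq]

theorem lq_h2 (hI : IsVertexCoverReduction G I) (v : V) : I.lq (v, 1) = 0 := by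
  simp [hI.lq_eq]

theorem E_r1_cases (hI : IsVertexCoverReduction G I) (hE : I.E (v, 0) h) :
    h = (v, 2) ∨ h = (v, 0) ∨ ∃ u, G.Adj v u ∧ h = (u, 1) := by
  obtain ⟨u, j⟩ := h
  rcases (hI.E_r1 v u j).mp hE with ⟨rfl, rfl | rfl⟩ | ⟨hvu, rfl⟩
  · exact Or.inl rfl
  · exact Or.inr (Or.inl rfl)
  · exact Or.inr (Or.inr ⟨u, hvu, rfl⟩)

theorem E_r2_cases (hI : IsVertexCoverReduction G I) (hE : I.E (v, 1) h) :
    h = (v, 1) ∨ h = (v, 2) := by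
  obtain ⟨u, j⟩ := h
  rcases (hI.E_r2 v u j).mp hE with ⟨rfl, rfl | rfl⟩ <;> simp

theorem eq_of_E_r3 (hI : IsVertexCoverReduction G I) (hE : I.E (v, 2) h) : h = (v, 1) := by
  obtain ⟨u, j⟩ := h
  obtain ⟨rfl, rfl⟩ := (hI.E_r3 v u j).mp hE
  rfl

theorem acceptable_of_coverMatching_eq_some (hI : IsVertexCoverReduction G I) {S : Finset V}
    (hr : coverMatching S r = some h) : I.E r h := by
  obtain ⟨v, i⟩ := r
  rcases fin_three_cases i with rfl | rfl | rfl <;> by_cases hv : v ∈ S <;>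
    simp [coverMatching, hv] at hr <;> subst hr <;> simp [hI.E_r1, hI.E_r2, hI.E_r3]

variable [Finite V]

theorem isMatching_coverMatching (hI : IsVertexCoverReduction G I) (S : Finset V) :
    I.IsMatching (coverMatching S) :=
  isMatching_of_injective (fun _ _ => hI.acceptable_of_coverMatching_eq_some)
    (fun _ _ _ => coverMatching_injective) fun h => (hI.uq_eq h.1 h.2).ge

theorem feasible_coverMatching (hI : IsVertexCoverReduction G I) (S : Finset V) :
    I.Feasible (coverMatching S) := by
  rintro ⟨v, j⟩
  rw [hI.lq_eq]
  split_ifs with hj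
  · subst hj
    refine (Set.ncard_pos).mpr ⟨(v, if v ∈ S then 0 else 1), ?_⟩
    by_cases hv : v ∈ S <;> simp [matchedTo, coverMatching, hv]
  · exact Nat.zero_le _

theorem coverMatching_eq_h3_of_blocks (hI : IsVertexCoverReduction G I) {S : Finset V}
    (hS : G.IsVertexCover ↑S) (hb : I.Blocks (coverMatching S) r h) :
    coverMatching S r = some (r.1, 2) := by
  have hM := hI.isMatching_coverMatching S
  obtain ⟨v, i⟩ := r
  rcases fin_three_cases i with rfl | rfl | rfl <;> by_cases hv : v ∈ S
  · simp [coverMatching, hv]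
  · exfalso
    rcases hI.E_r1_cases hb.1 with rfl | rfl | ⟨u, hvu, rfl⟩
    · exact hM.not_blocks_of_hPref_le (hI.uq_le_one _) (r' := (v, 1))
        (by simp [coverMatching, hv]) (hI.h3_r2_lt_r1 v).le hb
    · exact hb.2.1 (by simp [coverMatching, hv])
    · have hu : u ∈ S := (hS hvu).resolve_left hv
      exact hM.not_blocks_of_hPref_le (hI.uq_le_one _) (r' := (u, 1))
        (by simp [coverMatching, hu]) (hI.h2_r2_lt_r1 u v hvu.symm).le hb
  · exfalso
    rcases hI.E_r2_cases hb.1 with rfl | rfl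
    · exact hb.2.1 (by simp [coverMatching, hv])
    · exact (hb.2.2.1.2 (v, 1) (by simp [coverMatching, hv])).not_gt (hI.r2_h2_lt_h3 v)
  · simp [coverMatching, hv]
  · exfalso
    rw [hI.eq_of_E_r3 hb.1] at hb
    exact hM.not_blocks_of_hPref_le (hI.uq_le_one _) (r' := (v, 1))
      (by simp [coverMatching, hv]) (hI.h2_r2_lt_r3 v).le hb
  · exact absurd (by rw [hI.eq_of_E_r3 hb.1]; simp [coverMatching, hv]) hb.2.1

theorem relaxedStable_coverMatching (hI : IsVertexCoverReduction G I) {S : Finset V}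
    (hS : G.IsVertexCover ↑S) : I.RelaxedStable (coverMatching S) :=
  relaxedStable_of_blocks_matched
    (fun r _ hb => ⟨(r.1, 2), hI.coverMatching_eq_h3_of_blocks hS hb, by
      simp [hI.uq_eq, hI.lq_eq]⟩)
    (hI.isMatching_coverMatching S)

theorem r2_eq_h3_of_hPref_lt (hI : IsVertexCoverReduction G I) (hM : I.IsMatching M)
    (hRS : I.RelaxedStable M) (hr : M r = some (v, 1))
    (hlt : I.hPref (v, 1) (v, 1) < I.hPref (v, 1) r) : M (v, 1) = some (v, 2) := by
  have hE : I.E (v, 1) (v, 1) := (hI.E_r2 v v 1).mpr ⟨rfl, Or.inl rfl⟩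
  obtain ⟨h, hh⟩ := Option.ne_none_iff_exists'.mp
    (hRS.ne_none_of_hPref_lt hM (hI.uq_le_one _) hE hr hlt)
  rcases hI.E_r2_cases (hM.1 _ _ hh) with rfl | rfl
  · exact absurd hh (hM.ne_some_of_hPref_lt (hI.uq_le_one _) hr hlt)
  · exact hh

theorem r1_eq_h2_of_hPref_lt (hI : IsVertexCoverReduction G I) (hM : I.IsMatching M)
    (hRS : I.RelaxedStable M) (h2a : M (a, 1) = some (a, 2)) (hab : G.Adj a b)
    (hr : M r = some (b, 1)) (hlt : I.hPref (b, 1) (a, 0) < I.hPref (b, 1) r) :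
    ∃ c < b, G.Adj a c ∧ M (a, 0) = some (c, 1) := by
  have hE : I.E (a, 0) (b, 1) := (hI.E_r1 a b 1).mpr (Or.inr ⟨hab, rfl⟩)
  have hnot_h3 : M (a, 0) ≠ some (a, 2) := fun h1a => by
    simpa using hM.eq_of_eq_some (hI.uq_le_one _) h1a h2a
  have hlq : ∀ h₀, M (a, 0) = some h₀ → I.lq h₀ = 0 := by
    intro h₀ h₀a
    rcases hI.E_r1_cases (hM.1 _ _ h₀a) with rfl | rfl | ⟨u, -, rfl⟩
    · exact absurd h₀a hnot_h3
    · exact hI.lq_h1 a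
    · exact hI.lq_h2 u
  obtain ⟨h₀, h₀a, hne, hle⟩ :=
    hRS.exists_rPref_le_of_hPref_lt hM (hI.uq_le_one _) hE hr hlt hlq
  rcases hI.E_r1_cases (hM.1 _ _ h₀a) with rfl | rfl | ⟨c, hac, rfl⟩
  · exact absurd h₀a hnot_h3
  · exact absurd hle (hI.r1_h2_lt_h1 a b hab).not_ge
  · refine ⟨c, lt_of_le_of_ne ?_ fun hcb => hne (hcb ▸ rfl), hac, h₀a⟩
    exact not_lt.mp fun hbc => hle.not_gt (hI.r1_h2_lt_h2 a b c hab hac hbc)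

/-- The invariant of the descent: an edge whose two `r3` residents are matched is such a pair, and
`DescentPair.exists_lt` turns a pair `(a, b)` into a pair `(c, a)` with `c < b`. -/
def DescentPair (G : SimpleGraph V) (I : HRLQ (V × Fin 3) (V × Fin 3))
    (M : V × Fin 3 → Option (V × Fin 3)) (a b : V) : Prop :=
  G.Adj a b ∧ (∃ r, M r = some (b, 1) ∧ I.hPref (b, 1) (a, 0) < I.hPref (b, 1) r) ∧
    ∃ r, M r = some (a, 1) ∧ I.hPref (a, 1) (b, 0) ≤ I.hPref (a, 1) r

theorem DescentPair.exists_lt (hI : IsVertexCoverReduction G I) (hM : I.IsMatching M)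
    (hRS : I.RelaxedStable M) (hP : DescentPair G I M a b) : ∃ c < b, DescentPair G I M c a := by
  obtain ⟨hab, ⟨rb, hrb, hltb⟩, ⟨ra, hra, hlea⟩⟩ := hP
  have h2a : M (a, 1) = some (a, 2) :=
    hI.r2_eq_h3_of_hPref_lt hM hRS hra ((hI.h2_r2_lt_r1 a b hab).trans_le hlea)
  obtain ⟨c, hcb, hac, hc⟩ := hI.r1_eq_h2_of_hPref_lt hM hRS h2a hab hrb hltb
  exact ⟨c, hcb, hac.symm, ⟨ra, hra, (hI.h2_r1_lt_r1 a c b hac hab hcb).trans_le hlea⟩,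
    ⟨(a, 0), hc, le_rfl⟩⟩

theorem not_descentPair (hI : IsVertexCoverReduction G I) (hM : I.IsMatching M)
    (hRS : I.RelaxedStable M) (a b : V) : ¬ DescentPair G I M a b := by
  induction b using WellFoundedLT.induction generalizing a with
  | _ b ih =>
    intro hP
    obtain ⟨c, hcb, hP'⟩ := hP.exists_lt hI hM hRS
    obtain ⟨d, -, hP''⟩ := hP'.exists_lt hI hM hRS
    exact ih c hcb d hP''

theorem isVertexCover_r3_unmatched (hI : IsVertexCoverReduction G I) (hM : I.IsMatching M)
    (hRS : I.RelaxedStable M) : G.IsVertexCover {v | M (v, 2) = none} := by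
  intro u w huw
  by_contra! hcon
  obtain ⟨hu, hw⟩ := hcon
  have hr3 : ∀ v, M (v, 2) ≠ none → M (v, 2) = some (v, 1) := fun v hv => by
    obtain ⟨h, hh⟩ := Option.ne_none_iff_exists'.mp hv
    rw [hh, hI.eq_of_E_r3 (hM.1 _ _ hh)]
  exact hI.not_descentPair hM hRS u w ⟨huw, ⟨(w, 2), hr3 w hw, hI.h2_r1_lt_r3 w u huw.symm⟩,
    ⟨(u, 2), hr3 u hu, (hI.h2_r1_lt_r3 u w huw).le⟩⟩

theorem exists_isVertexCover_msize_add_card_le (hI : IsVertexCoverReduction G I)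
    (hM : I.IsMatching M) (hRS : I.RelaxedStable M) :
    ∃ S : Finset V, G.IsVertexCover ↑S ∧ msize M + S.card ≤ 3 * Nat.card V := by
  obtain ⟨S, hS⟩ := (Set.toFinite {v | M (v, 2) = none}).exists_finset_coe
  refine ⟨S, hS ▸ hI.isVertexCover_r3_unmatched hM hRS, ?_⟩
  have hsub : (fun v => (v, 2)) '' ↑S ⊆ {r | M r = none} := by
    rintro _ ⟨v, hv, rfl⟩
    rw [hS] at hv
    exact hv
  have hcard := Set.ncard_le_ncard hsub
  rw [Set.ncard_image_of_injective _ (Prod.mk_left_injective 2), Set.ncard_coe_finset] at hcard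
  have := msize_add_ncard_unmatched M
  rw [card_prod_fin_three] at this
  omega

end IsVertexCoverReduction

end HRLQ

theorem max_relaxed_stable_eq_vertex_cover_general
    {V : Type} [Fintype V] [LinearOrder V]
    (G : SimpleGraph V)
    (I : HRLQ (V × Fin 3) (V × Fin 3))
    -- acceptability structure (resident indices: 0=r1,1=r2,2=r3; hospital: 0=h1,1=h2,2=h3)
    (hE1 : ∀ v u (j : Fin 3), I.E (v, 0) (u, j) ↔
      (u = v ∧ (j = 2 ∨ j = 0)) ∨ (G.Adj v u ∧ j = 1))
    (hE2 : ∀ v u (j : Fin 3), I.E (v, 1) (u, j) ↔ u = v ∧ (j = 1 ∨ j = 2))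
    (hE3 : ∀ v u (j : Fin 3), I.E (v, 2) (u, j) ↔ u = v ∧ j = 1)
    -- r1ᵛ: h3ᵛ first, then the h2's of neighbors in the global order, then h1ᵛ last
    (hr1a : ∀ v u, G.Adj v u → I.rPref (v, 0) (v, 2) < I.rPref (v, 0) (u, 1))
    (hr1b : ∀ v u w, G.Adj v u → G.Adj v w → u < w →
      I.rPref (v, 0) (u, 1) < I.rPref (v, 0) (w, 1))
    (hr1c : ∀ v u, G.Adj v u → I.rPref (v, 0) (u, 1) < I.rPref (v, 0) (v, 0))
    (hr1d : ∀ v, I.rPref (v, 0) (v, 2) < I.rPref (v, 0) (v, 0))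
    -- r2ᵛ: h2ᵛ then h3ᵛ
    (hr2 : ∀ v, I.rPref (v, 1) (v, 1) < I.rPref (v, 1) (v, 2))
    -- h2ᵛ: r2ᵛ first, then the r1's of neighbors in the global order, then r3ᵛ last
    (hh2a : ∀ v u, G.Adj v u → I.hPref (v, 1) (v, 1) < I.hPref (v, 1) (u, 0))
    (hh2b : ∀ v u w, G.Adj v u → G.Adj v w → u < w →
      I.hPref (v, 1) (u, 0) < I.hPref (v, 1) (w, 0))
    (hh2c : ∀ v u, G.Adj v u → I.hPref (v, 1) (u, 0) < I.hPref (v, 1) (v, 2))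
    (hh2d : ∀ v, I.hPref (v, 1) (v, 1) < I.hPref (v, 1) (v, 2))
    -- h3ᵛ: r2ᵛ then r1ᵛ
    (hh3 : ∀ v, I.hPref (v, 2) (v, 1) < I.hPref (v, 2) (v, 0))
    -- quotas: h3ᵛ has quotas [1,1], all others [0,1]
    (hlq : ∀ v (j : Fin 3), I.lq (v, j) = if j = 2 then 1 else 0)
    (huq : ∀ v (j : Fin 3), I.uq (v, j) = 1) :
    sSup {n | ∃ M, I.IsMatching M ∧ I.Feasible M ∧ I.RelaxedStable M ∧
        HRLQ.msize M = n} =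
      3 * Fintype.card V -
        sInf {c | ∃ S : Finset V, S.card = c ∧
          ∀ u w, G.Adj u w → u ∈ S ∨ w ∈ S} := by
  have hI : HRLQ.IsVertexCoverReduction G I :=
    ⟨hE1, hE2, hE3, hr1a, hr1b, hr1c, hr1d, hr2, hh2a, hh2b, hh2c, hh2d, hh3, hlq, huq⟩
  set covers := {c | ∃ S : Finset V, S.card = c ∧ ∀ u w, G.Adj u w → u ∈ S ∨ w ∈ S}
  obtain ⟨S₀, hS₀card, hS₀⟩ : sInf covers ∈ covers :=
    Nat.sInf_mem ⟨_, Finset.univ, rfl, fun u _ _ => Or.inl (Finset.mem_univ u)⟩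
  rw [← Nat.card_eq_fintype_card]
  refine IsGreatest.csSup_eq ⟨⟨HRLQ.coverMatching S₀, hI.isMatching_coverMatching S₀,
    hI.feasible_coverMatching S₀, hI.relaxedStable_coverMatching fun _ _ huw => hS₀ _ _ huw, ?_⟩,
    ?_⟩
  · have := HRLQ.msize_coverMatching_add_card S₀
    omega
  · rintro _ ⟨M, hM, -, hRS, rfl⟩
    obtain ⟨S, hS, hle⟩ := hI.exists_isVertexCover_msize_add_card_le hM hRS
    have : sInf covers ≤ S.card := Nat.sInf_le ⟨S, rfl, fun u w huw => hS huw⟩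
    omega

/-- Vertex cover reduction for MAXRSM: in the reduced HRLQ instance (residents
r1ⁱ,r2ⁱ,r3ⁱ and hospitals h1ⁱ,h2ⁱ,h3ⁱ per vertex vᵢ, with the preference lists
r1ⁱ: h3ⁱ,h2-neighbors,h1ⁱ; r2ⁱ: h2ⁱ,h3ⁱ; r3ⁱ: h2ⁱ; h1ⁱ [0,1]: r1ⁱ;
h2ⁱ [0,1]: r2ⁱ,r1-neighbors,r3ⁱ; h3ⁱ [1,1]: r2ⁱ,r1ⁱ, using a fixed global
vertex ordering), the maximum size of a feasible relaxed stable matching equals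
3|V| minus the minimum size of a vertex cover of G. -/
theorem max_relaxed_stable_eq_vertex_cover
    {V : Type} [Fintype V] [LinearOrder V]
    (G : SimpleGraph V) [DecidableRel G.Adj]
    (I : HRLQ (V × Fin 3) (V × Fin 3))
    (hstrict : I.StrictPrefs)
    -- acceptability structure (resident indices: 0=r1,1=r2,2=r3; hospital: 0=h1,1=h2,2=h3)
    (hE1 : ∀ v u (j : Fin 3), I.E (v, 0) (u, j) ↔
      (u = v ∧ (j = 2 ∨ j = 0)) ∨ (G.Adj v u ∧ j = 1))
    (hE2 : ∀ v u (j : Fin 3), I.E (v, 1) (u, j) ↔ u = v ∧ (j = 1 ∨ j = 2))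
    (hE3 : ∀ v u (j : Fin 3), I.E (v, 2) (u, j) ↔ u = v ∧ j = 1)
    -- r1ᵛ: h3ᵛ first, then the h2's of neighbors in the global order, then h1ᵛ last
    (hr1a : ∀ v u, G.Adj v u → I.rPref (v, 0) (v, 2) < I.rPref (v, 0) (u, 1))
    (hr1b : ∀ v u w, G.Adj v u → G.Adj v w → u < w →
      I.rPref (v, 0) (u, 1) < I.rPref (v, 0) (w, 1))
    (hr1c : ∀ v u, G.Adj v u → I.rPref (v, 0) (u, 1) < I.rPref (v, 0) (v, 0))
    (hr1d : ∀ v, I.rPref (v, 0) (v, 2) < I.rPref (v, 0) (v, 0))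
    -- r2ᵛ: h2ᵛ then h3ᵛ
    (hr2 : ∀ v, I.rPref (v, 1) (v, 1) < I.rPref (v, 1) (v, 2))
    -- h2ᵛ: r2ᵛ first, then the r1's of neighbors in the global order, then r3ᵛ last
    (hh2a : ∀ v u, G.Adj v u → I.hPref (v, 1) (v, 1) < I.hPref (v, 1) (u, 0))
    (hh2b : ∀ v u w, G.Adj v u → G.Adj v w → u < w →
      I.hPref (v, 1) (u, 0) < I.hPref (v, 1) (w, 0))
    (hh2c : ∀ v u, G.Adj v u → I.hPref (v, 1) (u, 0) < I.hPref (v, 1) (v, 2))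
    (hh2d : ∀ v, I.hPref (v, 1) (v, 1) < I.hPref (v, 1) (v, 2))
    -- h3ᵛ: r2ᵛ then r1ᵛ
    (hh3 : ∀ v, I.hPref (v, 2) (v, 1) < I.hPref (v, 2) (v, 0))
    -- quotas: h3ᵛ has quotas [1,1], all others [0,1]
    (hlq : ∀ v (j : Fin 3), I.lq (v, j) = if j = 2 then 1 else 0)
    (huq : ∀ v (j : Fin 3), I.uq (v, j) = 1) :
    sSup {n | ∃ M, I.IsMatching M ∧ I.Feasible M ∧ I.RelaxedStable M ∧
        HRLQ.msize M = n} =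
      3 * Fintype.card V -
        sInf {c | ∃ S : Finset V, S.card = c ∧
          ∀ u w, G.Adj u w → u ∈ S ∨ w ∈ S} :=
  max_relaxed_stable_eq_vertex_cover_general G I hE1 hE2 hE3 hr1a hr1b hr1c hr1d hr2 hh2a hh2b hh2c
    hh2d hh3 hlq huq
end
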